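/- arXiv:1903.00842 — 9 statements merged into one kernel-verified Lean document; each statement's English description precedes it below -/
import Mathlib

section
/- Let C ⊆ ℝ^m be a convex cone, F : C → [0,∞) concave and positively homogeneous of degree one on C, and f : [0,∞) → ℝ convex, differentiable and nondecreasing. Let v, w ∈ C and suppose that the function u ↦ f(F(v + u·w)) (defined for u ≥ 0) has a right derivative d at u = 0, i.e. (f(F(v+u·w)) − f(F(v)))/u → d as u → 0⁺. Then d ≥ f'(F(v)) · F(w). -/
open Filter Set Topology

theorem add_le_apply_add_of_concave_of_homogeneous {E : Type*} [AddCommGroup E] [Module ℝ E]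
    {C : Set E} {F : E → ℝ} (hC_add : ∀ v ∈ C, ∀ w ∈ C, v + w ∈ C)
    (hF_hom : ∀ c : ℝ, 0 < c → ∀ v ∈ C, F (c • v) = c * F v)
    (hF_conc : ∀ v ∈ C, ∀ w ∈ C, ∀ s : ℝ, 0 ≤ s → s ≤ 1 →
      s * F v + (1 - s) * F w ≤ F (s • v + (1 - s) • w))
    {a b : E} (ha : a ∈ C) (hb : b ∈ C) :
    F a + F b ≤ F (a + b) := by
  have hmid := hF_conc a ha b hb (1 / 2) (by norm_num) (by norm_num)
  have hhalf : (1 / 2 : ℝ) • a + (1 - 1 / 2 : ℝ) • b = (1 / 2 : ℝ) • (a + b) := by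
    rw [smul_add]; norm_num
  rw [hhalf, hF_hom (1 / 2) (by norm_num) _ (hC_add a ha b hb)] at hmid
  linarith

theorem tendsto_slope_comp_add_mul_nhdsGT {f : ℝ → ℝ} {L a b : ℝ}
    (hf : HasDerivWithinAt f L (Ici a) a) (hb : 0 ≤ b) :
    Tendsto (fun u : ℝ => (f (a + u * b) - f a) / u) (𝓝[>] 0) (𝓝 (L * b)) := by
  have hline : HasDerivWithinAt (fun u : ℝ => a + u * b) b (Ioi 0) 0 := by
    simpa using ((hasDerivWithinAt_id (0 : ℝ) (Ioi 0)).mul_const b).const_add a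
  have hmaps : MapsTo (fun u : ℝ => a + u * b) (Ioi 0) (Ici a) := fun _ hu =>
    le_add_of_nonneg_right (mul_nonneg (le_of_lt hu) hb)
  have hcomp : HasDerivWithinAt (fun u : ℝ => f (a + u * b)) (L * b) (Ioi 0) 0 :=
    hf.comp_of_eq 0 hline hmaps (by simp)
  refine ((hasDerivWithinAt_iff_tendsto_slope' (lt_irrefl 0)).1 hcomp).congr fun u => ?_
  simp [slope_def_field]

theorem right_deriv_lower_bound_general
    {m : ℕ} (C : Set (EuclideanSpace ℝ (Fin m)))
    (hC_add : ∀ v ∈ C, ∀ w ∈ C, v + w ∈ C)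
    (hC_smul : ∀ c : ℝ, 0 < c → ∀ v ∈ C, c • v ∈ C)
    (F : EuclideanSpace ℝ (Fin m) → ℝ)
    (hF_nonneg : ∀ v ∈ C, 0 ≤ F v)
    (hF_hom : ∀ c : ℝ, 0 < c → ∀ v ∈ C, F (c • v) = c * F v)
    (hF_conc : ∀ v ∈ C, ∀ w ∈ C, ∀ s : ℝ, 0 ≤ s → s ≤ 1 →
      s * F v + (1 - s) * F w ≤ F (s • v + (1 - s) • w))
    (f : ℝ → ℝ)
    (hf_diff : ∀ t : ℝ, 0 ≤ t → DifferentiableWithinAt ℝ f (Set.Ici 0) t)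
    (hf_mono : MonotoneOn f (Set.Ici 0))
    (v w : EuclideanSpace ℝ (Fin m)) (hv : v ∈ C) (hw : w ∈ C)
    (d : ℝ)
    (hd : Filter.Tendsto (fun u : ℝ => (f (F (v + u • w)) - f (F v)) / u)
      (nhdsWithin 0 (Set.Ioi 0)) (nhds d)) :
    derivWithin f (Set.Ici 0) (F v) * F w ≤ d := by
  have hFv := hF_nonneg v hv
  have hFw := hF_nonneg w hw
  have hderiv : HasDerivWithinAt f (derivWithin f (Ici 0) (F v)) (Ici (F v)) (F v) :=
    (hf_diff _ hFv).hasDerivWithinAt.mono (Ici_subset_Ici.2 hFv)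
  -- Compare with the slopes of `f` along the line `F v + u * F w`, which lies below `F (v + u • w)`.
  refine le_of_tendsto_of_tendsto (tendsto_slope_comp_add_mul_nhdsGT hderiv hFw) hd ?_
  filter_upwards [self_mem_nhdsWithin] with u (hu : 0 < u)
  have huw := hC_smul u hu w hw
  have hle : F v + u * F w ≤ F (v + u • w) := by
    simpa [hF_hom u hu w hw] using
      add_le_apply_add_of_concave_of_homogeneous hC_add hF_hom hF_conc hv huw
  have hmono : f (F v + u * F w) ≤ f (F (v + u • w)) :=
    hf_mono (mem_Ici.2 (by positivity)) (hF_nonneg _ (hC_add v hv _ huw)) hle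
  exact div_le_div_of_nonneg_right (sub_le_sub_right hmono _) hu.le

/-- **Lower bound for the right derivative of `f ∘ F` along a cone direction.**
Let `C ⊆ ℝ^m` be a convex cone, `F : C → [0,∞)` concave and positively homogeneous of
degree one, and `f : [0,∞) → ℝ` convex, differentiable and nondecreasing. If the map
`u ↦ f (F (v + u • w))` has right derivative `d` at `u = 0`, then `d ≥ f' (F v) * F w`. -/
theorem right_deriv_lower_bound
    {m : ℕ} (C : Set (EuclideanSpace ℝ (Fin m)))
    (hC_ne : C.Nonempty)
    (hC_add : ∀ v ∈ C, ∀ w ∈ C, v + w ∈ C)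
    (hC_smul : ∀ c : ℝ, 0 < c → ∀ v ∈ C, c • v ∈ C)
    (F : EuclideanSpace ℝ (Fin m) → ℝ)
    (hF_nonneg : ∀ v ∈ C, 0 ≤ F v)
    (hF_hom : ∀ c : ℝ, 0 < c → ∀ v ∈ C, F (c • v) = c * F v)
    (hF_conc : ∀ v ∈ C, ∀ w ∈ C, ∀ s : ℝ, 0 ≤ s → s ≤ 1 →
      s * F v + (1 - s) * F w ≤ F (s • v + (1 - s) • w))
    (f : ℝ → ℝ)
    (hf_conv : ConvexOn ℝ (Set.Ici 0) f)
    (hf_diff : ∀ t : ℝ, 0 ≤ t → DifferentiableWithinAt ℝ f (Set.Ici 0) t)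
    (hf_mono : MonotoneOn f (Set.Ici 0))
    (v w : EuclideanSpace ℝ (Fin m)) (hv : v ∈ C) (hw : w ∈ C)
    (d : ℝ)
    (hd : Filter.Tendsto (fun u : ℝ => (f (F (v + u • w)) - f (F v)) / u)
      (nhdsWithin 0 (Set.Ioi 0)) (nhds d)) :
    derivWithin f (Set.Ici 0) (F v) * F w ≤ d :=
  right_deriv_lower_bound_general C hC_add hC_smul F hF_nonneg hF_hom hF_conc f hf_diff hf_mono v w
    hv hw d hd
end

section
/- Let C ⊆ ℝ^m be a convex cone, F : C → [0,∞) concave and positively homogeneous of degree one on C, and f : [0,∞) → ℝ strictly convex and differentiable with f'(0) = 0 (hence f is nondecreasing and f'(t) > 0 for t > 0). Let v, w ∈ C with F(v) > 0 and F(w) > 0, and suppose that the function u ↦ f(F(v + u·w)) has a right derivative d at u = 0. Then d ≥ f'(F(v))·F(w) > 0; in particular the right derivative is strictly positive. -/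
/-- **Strict positivity of the right derivative of `f ∘ F` along a timelike direction.**
Let `C ⊆ ℝ^m` be a convex cone, `F : C → [0,∞)` concave and positively homogeneous of
degree one, and `f : [0,∞) → ℝ` strictly convex and differentiable with `f' 0 = 0`.
If `F v > 0`, `F w > 0` and the map `u ↦ f (F (v + u • w))` has right derivative `d`
at `u = 0`, then `d ≥ f' (F v) * F w > 0`. -/
theorem right_deriv_strict_pos
    {m : ℕ} (C : Set (EuclideanSpace ℝ (Fin m)))
    (hC_ne : C.Nonempty)
    (hC_add : ∀ v ∈ C, ∀ w ∈ C, v + w ∈ C)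
    (hC_smul : ∀ c : ℝ, 0 < c → ∀ v ∈ C, c • v ∈ C)
    (F : EuclideanSpace ℝ (Fin m) → ℝ)
    (hF_nonneg : ∀ v ∈ C, 0 ≤ F v)
    (hF_hom : ∀ c : ℝ, 0 < c → ∀ v ∈ C, F (c • v) = c * F v)
    (hF_conc : ∀ v ∈ C, ∀ w ∈ C, ∀ s : ℝ, 0 ≤ s → s ≤ 1 →
      s * F v + (1 - s) * F w ≤ F (s • v + (1 - s) • w))
    (f : ℝ → ℝ)
    (hf_sconv : StrictConvexOn ℝ (Set.Ici 0) f)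
    (hf_diff : ∀ t : ℝ, 0 ≤ t → DifferentiableWithinAt ℝ f (Set.Ici 0) t)
    (hf'0 : derivWithin f (Set.Ici 0) 0 = 0)
    (v w : EuclideanSpace ℝ (Fin m)) (hv : v ∈ C) (hw : w ∈ C)
    (hFv : 0 < F v) (hFw : 0 < F w)
    (d : ℝ)
    (hd : Filter.Tendsto (fun u : ℝ => (f (F (v + u • w)) - f (F v)) / u)
      (nhdsWithin 0 (Set.Ioi 0)) (nhds d)) :
    derivWithin f (Set.Ici 0) (F v) * F w ≤ d ∧
      0 < derivWithin f (Set.Ici 0) (F v) * F w := by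
  set f' : ℝ → ℝ := derivWithin f (Set.Ici 0) with hf'
  have hfdOn : DifferentiableOn ℝ f (Set.Ici 0) := fun t ht => hf_diff t ht
  have hmono := hf_sconv.strictMonoOn_derivWithin hfdOn
  -- derivative is positive at positive points
  have hpos : ∀ t : ℝ, 0 < t → 0 < f' t := by
    intro t ht
    have h := hmono (Set.self_mem_Ici) (Set.mem_Ici.mpr ht.le) ht
    rw [← hf'] at h
    rwa [hf'0] at h
  have hfvpos : 0 < f' (F v) := hpos _ hFv
  refine ⟨?_, mul_pos hfvpos hFw⟩
  -- superadditivity of F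
  have hsuper : ∀ a ∈ C, ∀ b ∈ C, F a + F b ≤ F (a + b) := by
    intro a ha b hb
    have h := hF_conc a ha b hb (1/2) (by norm_num) (by norm_num)
    have heq : (1/2 : ℝ) • a + (1 - 1/2 : ℝ) • b = (1/2 : ℝ) • (a + b) := by
      rw [smul_add]; norm_num
    rw [heq, hF_hom (1/2) (by norm_num) _ (hC_add a ha b hb)] at h
    linarith
  -- key pointwise bound
  have key : ∀ u : ℝ, u ∈ Set.Ioi (0 : ℝ) →
      f' (F v) * F w ≤ (f (F (v + u • w)) - f (F v)) / u := by
    intro u hu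
    have hu : 0 < u := hu
    have huw : u • w ∈ C := hC_smul u hu w hw
    have hvuw : v + u • w ∈ C := hC_add v hv _ huw
    have h1 : F v + u * F w ≤ F (v + u • w) := by
      have := hsuper v hv (u • w) huw
      rwa [hF_hom u hu w hw] at this
    set x := F v + u * F w with hx
    set y := F (v + u • w) with hy
    have hx0 : 0 < x := by positivity
    have hymem : y ∈ Set.Ici (0 : ℝ) := hF_nonneg _ hvuw
    -- tangent line bound: f x - f (F v) ≥ f' (F v) * (u * F w)
    have htang : f (F v) + f' (F v) * (u * F w) ≤ f x := by
      have hlt : F v < x := by nlinarith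
      have := hf_sconv.convexOn.derivWithin_le_slope (Set.mem_Ici.mpr hFv.le)
        (Set.mem_Ici.mpr hx0.le) hlt (hf_diff _ hFv.le)
      rw [slope_def_field] at this
      rw [hf']
      have hxv : x - F v = u * F w := by ring
      have hpos' : (0:ℝ) < x - F v := by rw [hxv]; positivity
      rw [le_div_iff₀ hpos'] at this
      nlinarith [this]
    -- monotonicity: f x ≤ f y
    have hmono2 : f x ≤ f y := by
      rcases eq_or_lt_of_le h1 with h | h
      · rw [h]
      · have hslope := hf_sconv.convexOn.derivWithin_le_slope (Set.mem_Ici.mpr hx0.le)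
          hymem h (hf_diff _ hx0.le)
        rw [slope_def_field, ← hf'] at hslope
        have h2 := (hpos x hx0).le.trans hslope
        have hyx : 0 < y - x := by linarith
        rw [le_div_iff₀ hyx] at h2
        nlinarith [h2]
    rw [le_div_iff₀ hu]
    nlinarith [htang, hmono2]
  exact ge_of_tendsto hd (Filter.eventually_inf_principal.mpr
    (Filter.Eventually.of_forall key))
end

section
/- Let C ⊆ ℝ^m be a convex cone with nonempty interior, let v ∈ C, and let g be a real-valued function defined on a neighborhood of v that is differentiable at v, satisfies g(v) = 0, satisfies g ≥ 0 on C in a neighborhood of v, and has nonzero differential Dg(v) ≠ 0. Then Dg(v)(w) > 0 for every w in the interior of C. -/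
/-!
Since `g ≥ 0 = g v` on `C` near `v`, the point `v` is a local minimum of `g` on `C`. Every
`u ∈ C` is a feasible direction at `v` (the segment from `v` to `v + u` stays in the cone), so
`Dg u ≥ 0` on `C`. A linear functional that is nonnegative on `C` and vanishes at an interior
point `w` has a local minimum at `w`, hence is zero; so `Dg ≠ 0` forces `Dg w > 0`.
-/

theorem segment_add_subset_of_cone {E : Type*} [AddCommGroup E] [Module ℝ E] {C : Set E}
    (hC_add : ∀ v ∈ C, ∀ w ∈ C, v + w ∈ C) (hC_smul : ∀ c : ℝ, 0 < c → ∀ v ∈ C, c • v ∈ C)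
    {v u : E} (hv : v ∈ C) (hu : u ∈ C) : segment ℝ v (v + u) ⊆ C := by
  rintro _ ⟨a, t, ha, ht, hat, rfl⟩
  rcases ht.eq_or_lt with rfl | ht_pos
  · simpa [show a = 1 by linarith] using hv
  · have hcomb : a • v + t • (v + u) = v + t • u := by
      rw [smul_add, ← add_assoc, ← add_smul, hat, one_smul]
    exact hcomb ▸ hC_add v hv _ (hC_smul t ht_pos u hu)

theorem ContinuousLinearMap.pos_of_mem_interior_of_nonneg_on {E : Type*}
    [NormedAddCommGroup E] [NormedSpace ℝ E] {f : E →L[ℝ] ℝ} (hf : f ≠ 0)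
    {s : Set E} (hs : ∀ x ∈ s, 0 ≤ f x) {w : E} (hw : w ∈ interior s) : 0 < f w := by
  refine (hs w (interior_subset hw)).lt_of_ne fun hfw => hf ?_
  have hmin : IsLocalMin f w :=
    Filter.mem_of_superset (mem_interior_iff_mem_nhds.mp hw) fun x hx => hfw ▸ hs x hx
  exact hmin.hasFDerivAt_eq_zero f.hasFDerivAt

theorem differential_pos_on_interior_general
    {m : ℕ} (C : Set (EuclideanSpace ℝ (Fin m)))
    (hC_add : ∀ v ∈ C, ∀ w ∈ C, v + w ∈ C)
    (hC_smul : ∀ c : ℝ, 0 < c → ∀ v ∈ C, c • v ∈ C)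
    (v : EuclideanSpace ℝ (Fin m)) (hv : v ∈ C)
    (g : EuclideanSpace ℝ (Fin m) → ℝ)
    (Dg : EuclideanSpace ℝ (Fin m) →L[ℝ] ℝ)
    (hg_diff : HasFDerivAt g Dg v)
    (hg_v : g v = 0)
    (hg_nonneg : ∃ U ∈ nhds v, ∀ y ∈ U ∩ C, 0 ≤ g y)
    (hDg : Dg ≠ 0) :
    ∀ w ∈ interior C, 0 < Dg w := by
  obtain ⟨U, hU, hgU⟩ := hg_nonneg
  have hmin : IsLocalMinOn g C v :=
    Filter.mem_of_superset (inter_mem_nhdsWithin C hU) fun y hy => hg_v ▸ hgU y ⟨hy.2, hy.1⟩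
  have hDg_nonneg : ∀ u ∈ C, 0 ≤ Dg u := fun u hu =>
    hmin.hasFDerivWithinAt_nonneg hg_diff.hasFDerivWithinAt
      (mem_posTangentConeAt_of_segment_subset (segment_add_subset_of_cone hC_add hC_smul hv hu))
  exact fun w hw => Dg.pos_of_mem_interior_of_nonneg_on hDg hDg_nonneg hw

/-- **Strict positivity of a nonzero differential on the interior of a cone.**
Let `C ⊆ ℝ^m` be a convex cone with nonempty interior, `v ∈ C`, and `g` differentiable
at `v` with `g v = 0`, `g ≥ 0` on `C` near `v`, and nonzero differential `Dg ≠ 0`.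
Then `Dg w > 0` for every `w` in the interior of `C`. -/
theorem differential_pos_on_interior
    {m : ℕ} (C : Set (EuclideanSpace ℝ (Fin m)))
    (hC_ne : C.Nonempty)
    (hC_add : ∀ v ∈ C, ∀ w ∈ C, v + w ∈ C)
    (hC_smul : ∀ c : ℝ, 0 < c → ∀ v ∈ C, c • v ∈ C)
    (hC_int : (interior C).Nonempty)
    (v : EuclideanSpace ℝ (Fin m)) (hv : v ∈ C)
    (g : EuclideanSpace ℝ (Fin m) → ℝ)
    (Dg : EuclideanSpace ℝ (Fin m) →L[ℝ] ℝ)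
    (hg_diff : HasFDerivAt g Dg v)
    (hg_v : g v = 0)
    (hg_nonneg : ∃ U ∈ nhds v, ∀ y ∈ U ∩ C, 0 ≤ g y)
    (hDg : Dg ≠ 0) :
    ∀ w ∈ interior C, 0 < Dg w :=
  differential_pos_on_interior_general C hC_add hC_smul v hv g Dg hg_diff hg_v hg_nonneg hDg
end

section
/- Let W ⊆ ℝ^m × ℝ^n be open and let G : W → ℝ be such that for each x the partial map v ↦ G(x,v) is differentiable, and the vertical differential (x,v) ↦ D_v G(x,v) (a linear map ℝ^n → ℝ) is continuous on W. Let K ⊆ W be compact and let e ∈ ℝ^n satisfy D_v G(x,v)(e) > 0 for every (x,v) ∈ K. Then there exist δ > 0 and u₀ > 0 such that for every (x,v) ∈ K and every u ∈ [0,u₀] one has (x, v + u·e) ∈ W and G(x, v + u·e) ≥ G(x,v) + δ·u. -/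
/-!
By compactness, `D_v G (x, v) e` is bounded below by some `δ > 0` on a whole metric
neighbourhood of `K` inside `W`. Vertical segments of length at most `u₀` starting in `K` stay
in that neighbourhood, and along them the mean value inequality gives growth at rate `≥ δ`.
-/

open Set Metric

theorem IsCompact.exists_pos_forall_mem_thickening_lt {X : Type*} [PseudoMetricSpace X]
    {K W : Set X} {f : X → ℝ} (hK : IsCompact K) (hW : IsOpen W) (hKW : K ⊆ W)
    (hf : ContinuousOn f W) (hfK : ∀ p ∈ K, 0 < f p) :
    ∃ δ > 0, ∃ r > 0, ∀ q ∈ thickening r K, q ∈ W ∧ δ < f q := by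
  obtain ⟨c, hc, hcK⟩ := hK.exists_forall_le' (hf.mono hKW) hfK
  have hKU : K ⊆ W ∩ f ⁻¹' Ioi (c / 2) := fun p hp =>
    ⟨hKW hp, show c / 2 < f p by linarith [hcK p hp]⟩
  obtain ⟨r, hr, hrU⟩ :=
    hK.exists_thickening_subset_open (hf.isOpen_inter_preimage hW isOpen_Ioi) hKU
  exact ⟨c / 2, by positivity, r, hr, fun q hq => hrU hq⟩

theorem Prod.mk_fst_snd_add_mem_thickening {E F : Type*} [SeminormedAddCommGroup E]
    [SeminormedAddCommGroup F] {K : Set (E × F)} {p : E × F} (hp : p ∈ K) {w : F} {r : ℝ}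
    (hw : ‖w‖ < r) : (p.1, p.2 + w) ∈ thickening r K :=
  mem_thickening_iff.2 ⟨p, hp, by simpa [Prod.dist_eq] using hw⟩

theorem add_mul_le_of_le_fderiv_apply_segment {E : Type*} [NormedAddCommGroup E]
    [NormedSpace ℝ E] {g : E → ℝ} {D : E → E →L[ℝ] ℝ} {v e : E} {u δ : ℝ} (hu : 0 ≤ u)
    (hg : ∀ t ∈ Icc 0 u, HasFDerivAt g (D (v + t • e)) (v + t • e))
    (hD : ∀ t ∈ Icc 0 u, δ ≤ D (v + t • e) e) :
    g v + δ * u ≤ g (v + u • e) := by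
  have hderiv : ∀ t ∈ Icc 0 u, HasDerivAt (fun t => g (v + t • e)) (D (v + t • e) e) t :=
    fun t ht => (hg t ht).comp_hasDerivAt t <| by
      simpa using ((hasDerivAt_id t).smul_const e).const_add v
  have hmvt := (convex_Icc 0 u).mul_sub_le_image_sub_of_le_deriv
    (fun t ht => (hderiv t ht).continuousAt.continuousWithinAt)
    (fun t ht => (hderiv t (interior_subset ht)).differentiableAt.differentiableWithinAt)
    (fun t ht => (hderiv t (interior_subset ht)).deriv ▸ hD t (interior_subset ht))
    0 (left_mem_Icc.2 hu) u (right_mem_Icc.2 hu) hu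
  simp only [zero_smul, add_zero, sub_zero] at hmvt
  linarith

/-- **Uniform vertical-increase lemma.** Let `W ⊆ ℝ^m × ℝ^n` be open and `G : W → ℝ`
be such that each partial map `v ↦ G (x, v)` is differentiable with vertical differential
`D_v G` continuous on `W`. If `K ⊆ W` is compact and `e ∈ ℝ^n` satisfies
`D_v G (x, v) e > 0` on `K`, then there are `δ > 0` and `u₀ > 0` such that for every
`(x, v) ∈ K` and `u ∈ [0, u₀]` one has `(x, v + u • e) ∈ W` and
`G (x, v + u • e) ≥ G (x, v) + δ * u`. -/
theorem uniform_vertical_increase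
    {m n : ℕ}
    (W : Set (EuclideanSpace ℝ (Fin m) × EuclideanSpace ℝ (Fin n)))
    (hW : IsOpen W)
    (G : EuclideanSpace ℝ (Fin m) → EuclideanSpace ℝ (Fin n) → ℝ)
    (DvG : EuclideanSpace ℝ (Fin m) → EuclideanSpace ℝ (Fin n) →
      (EuclideanSpace ℝ (Fin n) →L[ℝ] ℝ))
    (hG_diff : ∀ p ∈ W, HasFDerivAt (fun v => G p.1 v) (DvG p.1 p.2) p.2)
    (hDvG_cont : ContinuousOn (fun p => DvG p.1 p.2) W)
    (K : Set (EuclideanSpace ℝ (Fin m) × EuclideanSpace ℝ (Fin n)))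
    (hK : IsCompact K) (hKW : K ⊆ W)
    (e : EuclideanSpace ℝ (Fin n))
    (he : ∀ p ∈ K, 0 < DvG p.1 p.2 e) :
    ∃ δ > (0 : ℝ), ∃ u₀ > (0 : ℝ), ∀ p ∈ K, ∀ u : ℝ, 0 ≤ u → u ≤ u₀ →
      (p.1, p.2 + u • e) ∈ W ∧ G p.1 p.2 + δ * u ≤ G p.1 (p.2 + u • e) := by
  obtain ⟨δ, hδ, r, hr, hthick⟩ := hK.exists_pos_forall_mem_thickening_lt hW hKW
    ((ContinuousLinearMap.apply ℝ ℝ e).continuous.comp_continuousOn hDvG_cont) he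
  set u₀ := r / (‖e‖ + 1)
  have hu₀e : u₀ * ‖e‖ < r := by
    rw [div_mul_eq_mul_div, div_lt_iff₀ (by positivity)]
    nlinarith [norm_nonneg e]
  refine ⟨δ, hδ, u₀, by positivity, fun p hp u hu0 hu => ?_⟩
  have hseg : ∀ t ∈ Icc 0 u, (p.1, p.2 + t • e) ∈ W ∧ δ < DvG p.1 (p.2 + t • e) e :=
    fun t ht => hthick _ <| Prod.mk_fst_snd_add_mem_thickening hp <| by
      rw [norm_smul, Real.norm_of_nonneg ht.1]
      exact lt_of_le_of_lt (by gcongr; exact ht.2.trans hu) hu₀e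
  exact ⟨(hseg u ⟨hu0, le_rfl⟩).1, add_mul_le_of_le_fderiv_apply_segment hu0
    (fun t ht => hG_diff _ (hseg t ht).1) (fun t ht => (hseg t ht).2.le)⟩
end

section
/- Let I ⊆ ℝ be a compact interval of positive length, and let N ⊆ I be a Lebesgue-measurable set with 0 < μ(N) < μ(I), where μ denotes Lebesgue measure. Let I₁, …, I_m be finitely many open intervals of ℝ whose union contains I. Then there exists an index k such that 0 < μ(N ∩ I_k) < μ(I ∩ I_k). -/
/-!
If the conclusion fails, every interval `Iₖ` is either `N`-null or `(I \ N)`-null. Then the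
supports of Lebesgue measure restricted to `N` and to `I \ N` are two disjoint closed sets
covering `I`, so by connectedness of `I` one of them is empty, i.e. `μ N = 0` or `μ (I \ N) = 0`.
-/

open MeasureTheory Measure Set Topology

namespace MeasureTheory.Measure

variable {X : Type*} [TopologicalSpace X] [MeasurableSpace X]

theorem support_restrict_eq_self [OpensMeasurableSpace X] (μ : Measure X) [μ.IsOpenPosMeasure]
    {s : Set X} (hs : IsClosed s) (hsi : s ⊆ closure (interior s)) :
    (μ.restrict s).support = s := by
  refine (support_restrict_subset.trans ?_).antisymm ?_
  · exact inter_subset_left.trans hs.closure_subset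
  · have : interior s ⊆ (μ.restrict s).support := by
      simpa [support_eq_univ] using interior_inter_support (μ := μ) (s := s)
    exact hsi.trans (closure_minimal this isClosed_support)

/-- The supports of `μ.restrict t` and `μ.restrict tᶜ` are closed sets covering `μ.support`;
the local hypothesis makes them disjoint, so connectedness forces one of them to be empty. -/
theorem measure_eq_zero_or_measure_compl_eq_zero_of_isPreconnected_support
    [HereditarilyLindelofSpace X] {μ : Measure X} (hμ : IsPreconnected μ.support)
    {t : Set X} (ht : MeasurableSet t)
    (hloc : ∀ x ∈ μ.support, ∃ U ∈ 𝓝 x, μ (t ∩ U) = 0 ∨ μ (tᶜ ∩ U) = 0) :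
    μ t = 0 ∨ μ tᶜ = 0 := by
  set P := (μ.restrict t).support
  set Q := (μ.restrict tᶜ).support
  have hPQ : μ.support = P ∪ Q := by
    rw [← support_add, restrict_add_restrict_compl ht]
  have hdisj : μ.support ∩ (P ∩ Q) = ∅ := by
    refine eq_empty_of_forall_notMem fun x ⟨hx, hxP, hxQ⟩ => ?_
    obtain ⟨U, hU, hU0 | hU0⟩ := hloc x hx
    · exact notMem_support_iff_exists.2 ⟨U, hU, by rwa [restrict_apply' ht, inter_comm]⟩ hxP
    · exact notMem_support_iff_exists.2
        ⟨U, hU, by rwa [restrict_apply' ht.compl, inter_comm]⟩ hxQ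
  have key := isPreconnected_closed_iff.1 hμ P Q isClosed_support isClosed_support hPQ.subset
  by_contra! h
  refine (not_nonempty_iff_eq_empty.2 hdisj) (key ?_ ?_)
  · rw [hPQ, union_inter_cancel_left, nonempty_support_iff]
    exact (restrict_eq_zero.not).2 h.1
  · rw [hPQ, union_inter_cancel_right, nonempty_support_iff]
    exact (restrict_eq_zero.not).2 h.2

theorem restrict_inter_eq_zero_or_restrict_compl_inter_eq_zero {α : Type*} [MeasurableSpace α]
    {μ : Measure α} {s t U : Set α} (ht : MeasurableSet t) (hts : t ⊆ s) (hU : MeasurableSet U)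
    (hs : μ s ≠ ⊤) (h : 0 < μ (t ∩ U) → μ (s ∩ U) ≤ μ (t ∩ U)) :
    μ.restrict s (t ∩ U) = 0 ∨ μ.restrict s (tᶜ ∩ U) = 0 := by
  rcases eq_zero_or_pos (μ (t ∩ U)) with h0 | h0
  · exact .inl (nonpos_iff_eq_zero.1 ((restrict_le_self _).trans_eq h0))
  have hnull : μ ((s ∩ U) \ (t ∩ U)) = 0 :=
    nonpos_iff_eq_zero.1 <| (measure_sdiff_le_iff_le_add (ht.inter hU).nullMeasurableSet
      (inter_subset_inter_left _ hts) (ne_top_of_le_ne_top hs (measure_mono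
        (inter_subset_left.trans hts)))).2 (by rw [add_zero]; exact h h0)
  rw [restrict_apply (ht.compl.inter hU)]
  refine .inr (measure_mono_null ?_ hnull)
  rintro y ⟨⟨hyt, hyU⟩, hys⟩
  exact ⟨⟨hys, hyU⟩, fun hy => hyt hy.1⟩

end MeasureTheory.Measure

theorem Real.support_volume_restrict_Icc {a b : ℝ} (hab : a < b) :
    (volume.restrict (Icc a b)).support = Icc a b :=
  support_restrict_eq_self volume isClosed_Icc (by rw [interior_Icc, closure_Ioo hab.ne])

/-- **Measure-theoretic covering lemma.** Let `I = [a,b]` be a compact interval of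
positive length and `N ⊆ I` measurable with `0 < μ N < μ I`. If finitely many open
intervals `(c k, d k)`, `k : Fin m`, cover `I`, then some `k` satisfies
`0 < μ (N ∩ (c k, d k)) < μ (I ∩ (c k, d k))`. -/
theorem exists_interval_partial_measure
    (a b : ℝ) (hab : a < b)
    (N : Set ℝ) (hN_sub : N ⊆ Set.Icc a b) (hN_meas : MeasurableSet N)
    (hN_pos : 0 < volume N) (hN_lt : volume N < volume (Set.Icc a b))
    (m : ℕ) (c d : Fin m → ℝ)
    (hcov : Set.Icc a b ⊆ ⋃ k, Set.Ioo (c k) (d k)) :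
    ∃ k : Fin m, 0 < volume (N ∩ Set.Ioo (c k) (d k)) ∧
      volume (N ∩ Set.Ioo (c k) (d k)) < volume (Set.Icc a b ∩ Set.Ioo (c k) (d k)) := by
  by_contra! hcon
  have hsupp := Real.support_volume_restrict_Icc hab
  have hloc : ∀ x ∈ (volume.restrict (Icc a b)).support, ∃ U ∈ 𝓝 x,
      volume.restrict (Icc a b) (N ∩ U) = 0 ∨ volume.restrict (Icc a b) (Nᶜ ∩ U) = 0 := by
    intro x hx
    obtain ⟨k, hxk⟩ := mem_iUnion.1 (hcov (hsupp ▸ hx))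
    exact ⟨_, Ioo_mem_nhds hxk.1 hxk.2, restrict_inter_eq_zero_or_restrict_compl_inter_eq_zero
      hN_meas hN_sub measurableSet_Ioo measure_Icc_lt_top.ne (hcon k)⟩
  rcases measure_eq_zero_or_measure_compl_eq_zero_of_isPreconnected_support
    (by rw [hsupp]; exact isPreconnected_Icc) hN_meas hloc with h | h
  · rw [restrict_apply hN_meas, inter_eq_left.2 hN_sub] at h
    exact hN_pos.ne' h
  · rw [restrict_apply hN_meas.compl, inter_comm, ← Set.sdiff_eq] at h
    exact hN_lt.not_ge (measure_mono_ae (ae_le_set.2 h))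
end

section
/- Let n ≥ 0 and let e₀ ∈ ℝ^{n+1} be a unit vector. Let δ, k, r > 0, let a < 0, set σ := (1+k)/δ and h(t) := r·e^{σt}. Let Ω ⊆ ℝ^{n+1}, let D̃ ⊆ ℝ^{n+1}, let u₀ > 0, and let G be a real-valued function defined on Ω × (D̃ + [0,u₀)·e₀) such that: (i) G(x, v + u·e₀) ≥ G(x,v) + u·δ for all x ∈ Ω, v ∈ D̃ and u ∈ [0,u₀); (ii) |G(y,v) − G(x,v)| ≤ k·‖y−x‖ for all x, y ∈ Ω and v ∈ D̃. Let γ : [a,0] → ℝ^{n+1} be Lipschitz with γ'(t) ∈ D̃ for almost every t, and let ε > 0 satisfy ε·σ·h(0) < u₀ and γ(t) ∈ Ω and γ(t) + ε·h(t)·e₀ ∈ Ω for all t ∈ [a,0]. Define Γ(t) := γ(t) + ε·h(t)·e₀. Then for almost every t ∈ [a,0]: G(Γ(t), Γ'(t)) ≥ G(γ(t), γ'(t)) + ε·r·e^{σa}. -/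
open MeasureTheory

/-- **Core deformation estimate.** Deforming a causal curve `γ : [a,0] → ℝ^{n+1}` in a
fixed unit direction `e₀` by the exponential profile `h t = r * exp (σ t)`, with
`σ = (1 + k)/δ`, strictly increases the value of the Lagrangian `G` along the curve:
if (i) `G (x, v + u • e₀) ≥ G (x,v) + u δ` and (ii) `|G (y,v) − G (x,v)| ≤ k ‖y − x‖`
hold on the relevant domains, then for almost every `t ∈ [a,0]`,
`G (Γ t, Γ' t) ≥ G (γ t, γ' t) + ε r e^{σ a}`, where `Γ t = γ t + ε h t • e₀` and
`Γ' t = γ' t + ε σ h t • e₀`. -/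
theorem deformation_estimate
    {n : ℕ} (e₀ : EuclideanSpace ℝ (Fin (n + 1))) (he₀ : ‖e₀‖ = 1)
    (δ k r a : ℝ) (hδ : 0 < δ) (hk : 0 < k) (hr : 0 < r) (ha : a < 0)
    (Ω D : Set (EuclideanSpace ℝ (Fin (n + 1)))) (u₀ : ℝ) (hu₀ : 0 < u₀)
    (G : EuclideanSpace ℝ (Fin (n + 1)) → EuclideanSpace ℝ (Fin (n + 1)) → ℝ)
    (hG1 : ∀ x ∈ Ω, ∀ v ∈ D, ∀ u : ℝ, 0 ≤ u → u < u₀ →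
      G x v + u * δ ≤ G x (v + u • e₀))
    (hG2 : ∀ x ∈ Ω, ∀ y ∈ Ω, ∀ v ∈ D, |G y v - G x v| ≤ k * ‖y - x‖)
    (γ γ' : ℝ → EuclideanSpace ℝ (Fin (n + 1))) (Kγ : NNReal)
    (hγ_lip : LipschitzOnWith Kγ γ (Set.Icc a 0))
    (hγ' : ∀ᵐ t ∂(volume.restrict (Set.Icc a 0)),
      HasDerivWithinAt γ (γ' t) (Set.Icc a 0) t ∧ γ' t ∈ D)
    (ε : ℝ) (hε : 0 < ε)
    (hεu : ε * ((1 + k) / δ) * r < u₀)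
    (hΩ : ∀ t ∈ Set.Icc a 0, γ t ∈ Ω ∧
      γ t + (ε * (r * Real.exp ((1 + k) / δ * t))) • e₀ ∈ Ω) :
    ∀ᵐ t ∂(volume.restrict (Set.Icc a 0)),
      G (γ t) (γ' t) + ε * r * Real.exp ((1 + k) / δ * a) ≤
        G (γ t + (ε * (r * Real.exp ((1 + k) / δ * t))) • e₀)
          (γ' t + (ε * ((1 + k) / δ) * (r * Real.exp ((1 + k) / δ * t))) • e₀) := by
  have hσ : 0 < (1 + k) / δ := div_pos (by linarith) hδ
  filter_upwards [hγ', ae_restrict_mem measurableSet_Icc] with t ht htmem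
  obtain ⟨-, hD⟩ := ht
  obtain ⟨hta, ht0⟩ := htmem
  set σ := (1 + k) / δ with hσdef
  have hexp_pos : 0 < Real.exp (σ * t) := Real.exp_pos _
  have hexp1 : Real.exp (σ * t) ≤ 1 := Real.exp_le_one_iff.mpr (by nlinarith)
  have hexpa : Real.exp (σ * a) ≤ Real.exp (σ * t) :=
    Real.exp_le_exp.mpr (by nlinarith)
  set u : ℝ := ε * σ * (r * Real.exp (σ * t)) with hudef
  have hu0 : 0 ≤ u := by positivity
  have huu : u < u₀ := by
    have h := mul_le_mul_of_nonneg_left hexp1 (by positivity : (0:ℝ) ≤ ε * σ * r)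
    calc u = ε * σ * r * Real.exp (σ * t) := by rw [hudef]; ring
      _ ≤ ε * σ * r * 1 := h
      _ = ε * σ * r := by ring
      _ < u₀ := hεu
  obtain ⟨hΩ1, hΩ2⟩ := hΩ t ⟨hta, ht0⟩
  have h1 := hG1 _ hΩ2 (γ' t) hD u hu0 huu
  have h2 := hG2 (γ t) hΩ1 _ hΩ2 (γ' t) hD
  have hnorm : ‖γ t + (ε * (r * Real.exp (σ * t))) • e₀ - γ t‖
      = ε * (r * Real.exp (σ * t)) := by
    rw [add_sub_cancel_left, norm_smul, he₀, mul_one, Real.norm_eq_abs,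
      abs_of_nonneg (by positivity)]
  rw [hnorm] at h2
  have h2' := abs_le.mp h2
  have huδ : u * δ = ε * (r * Real.exp (σ * t)) + k * (ε * (r * Real.exp (σ * t))) := by
    rw [hudef, hσdef]; field_simp
  have hfin : ε * r * Real.exp (σ * a) ≤ ε * (r * Real.exp (σ * t)) := by
    have h := mul_le_mul_of_nonneg_left hexpa (mul_pos hε hr).le
    calc ε * r * Real.exp (σ * a) ≤ ε * r * Real.exp (σ * t) := by linarith
      _ = ε * (r * Real.exp (σ * t)) := by ring
  linarith [h2'.1]
end

section
/- Let E be a real normed vector space, U ⊆ E, and D : U × U → [0,∞) a function satisfying D(x,x) = 0 for all x ∈ U, the triangle inequality D(x,z) ≤ D(x,y) + D(y,z) for all x, y, z ∈ U, and such that for each fixed x₁ ∈ U the map x ↦ D(x₁,x) is continuous on U. Suppose L > 0 is such that every point a ∈ U admits ρ_a > 0 with: for all b ∈ U with ‖b−a‖ < ρ_a one has D(a,b) ≤ L·‖b−a‖. Then D(x₁,x₂) ≤ L·‖x₂−x₁‖ for all x₁, x₂ ∈ U such that the straight segment {(1−s)x₁ + s x₂ : s ∈ [0,1]} is contained in U.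 -/
/-- **Local-to-global Lipschitz estimate along segments.** Let `E` be a real normed
vector space, `U ⊆ E`, and `D : U × U → [0,∞)` with `D x x = 0`, the triangle inequality,
and `x ↦ D x₁ x` continuous on `U` for each `x₁ ∈ U`. If `L > 0` is such that every
`a ∈ U` has `ρ_a > 0` with `D a b ≤ L * ‖b − a‖` whenever `b ∈ U` and `‖b − a‖ < ρ_a`,
then `D x₁ x₂ ≤ L * ‖x₂ − x₁‖` whenever the segment from `x₁` to `x₂` lies in `U`. -/
theorem local_to_global_lipschitz
    {E : Type*} [NormedAddCommGroup E] [NormedSpace ℝ E]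
    (U : Set E) (D : E → E → ℝ)
    (hD_nonneg : ∀ x ∈ U, ∀ y ∈ U, 0 ≤ D x y)
    (hD_refl : ∀ x ∈ U, D x x = 0)
    (hD_tri : ∀ x ∈ U, ∀ y ∈ U, ∀ z ∈ U, D x z ≤ D x y + D y z)
    (hD_cont : ∀ x₁ ∈ U, ContinuousOn (fun x => D x₁ x) U)
    (L : ℝ) (hL : 0 < L)
    (hloc : ∀ a ∈ U, ∃ ρ > (0 : ℝ), ∀ b ∈ U, ‖b - a‖ < ρ → D a b ≤ L * ‖b - a‖) :
    ∀ x₁ ∈ U, ∀ x₂ ∈ U,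
      (∀ s ∈ Set.Icc (0 : ℝ) 1, (1 - s) • x₁ + s • x₂ ∈ U) →
      D x₁ x₂ ≤ L * ‖x₂ - x₁‖ := by
  intro x₁ hx₁ x₂ hx₂ hseg
  by_cases hne : x₂ = x₁
  · subst hne
    rw [hD_refl x₂ hx₂]
    simp
  set c : ℝ := ‖x₂ - x₁‖ with hc_def
  have hc : 0 < c := norm_pos_iff.mpr (sub_ne_zero.mpr hne)
  set γ : ℝ → E := fun s => (1 - s) • x₁ + s • x₂ with hγ_def
  have hγdiff : ∀ s t : ℝ, γ t - γ s = (t - s) • (x₂ - x₁) := by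
    intro s t
    simp only [hγ_def]
    module
  have hγnorm : ∀ s t : ℝ, ‖γ t - γ s‖ = |t - s| * c := by
    intro s t
    rw [hγdiff, norm_smul, Real.norm_eq_abs]
  have hγcont : Continuous γ := by
    apply Continuous.add
    · exact (continuous_const.sub continuous_id).smul continuous_const
    · exact continuous_id.smul continuous_const
  have hγmem : ∀ s ∈ Set.Icc (0 : ℝ) 1, γ s ∈ U := hseg
  set S : Set ℝ := {s ∈ Set.Icc (0 : ℝ) 1 | D x₁ (γ s) ≤ L * (s * c)} with hS_def
  have hγ0 : γ 0 = x₁ := by simp [hγ_def]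
  have hγ1 : γ 1 = x₂ := by simp [hγ_def]
  have h0S : (0 : ℝ) ∈ S := by
    constructor
    · exact ⟨le_refl _, zero_le_one⟩
    · rw [hγ0, hD_refl x₁ hx₁]; simp
  have hSne : S.Nonempty := ⟨0, h0S⟩
  have hSclosed : IsClosed S := by
    have h1 : ContinuousOn (fun s => D x₁ (γ s)) (Set.Icc (0 : ℝ) 1) := by
      apply (hD_cont x₁ hx₁).comp hγcont.continuousOn
      intro s hs; exact hγmem s hs
    have h2 : ContinuousOn (fun s : ℝ => L * (s * c)) (Set.Icc (0 : ℝ) 1) := by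
      fun_prop
    exact isClosed_Icc.isClosed_le h1 h2
  have hScompact : IsCompact S := by
    apply isCompact_Icc.of_isClosed_subset hSclosed
    intro s hs; exact hs.1
  set σ : ℝ := sSup S with hσ_def
  have hσS : σ ∈ S := hScompact.sSup_mem hSne
  have hσle1 : σ ≤ 1 := hσS.1.2
  have hσ1 : σ = 1 := by
    by_contra hσne
    have hσlt : σ < 1 := lt_of_le_of_ne hσle1 hσne
    obtain ⟨ρ, hρ, hρest⟩ := hloc (γ σ) (hγmem σ hσS.1)
    set δ : ℝ := min (ρ / (2 * c)) (1 - σ) with hδ_def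
    have hδpos : 0 < δ := lt_min (by positivity) (by linarith)
    set t : ℝ := σ + δ with ht_def
    have ht1 : t ≤ 1 := by
      have : δ ≤ 1 - σ := min_le_right _ _
      linarith
    have htIcc : t ∈ Set.Icc (0 : ℝ) 1 := ⟨by linarith [hσS.1.1], ht1⟩
    have htnorm : ‖γ t - γ σ‖ = δ * c := by
      rw [hγnorm]
      have : t - σ = δ := by ring
      rw [this, abs_of_pos hδpos]
    have htρ : ‖γ t - γ σ‖ < ρ := by
      rw [htnorm]
      have h1 : δ ≤ ρ / (2 * c) := min_le_left _ _
      have : δ * c ≤ ρ / 2 := by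
        calc δ * c ≤ (ρ / (2 * c)) * c := by nlinarith
        _ = ρ / 2 := by field_simp
      linarith
    have hDstep : D (γ σ) (γ t) ≤ L * (δ * c) := by
      have := hρest (γ t) (hγmem t htIcc) htρ
      rwa [htnorm] at this
    have htS : t ∈ S := by
      refine ⟨htIcc, ?_⟩
      calc D x₁ (γ t) ≤ D x₁ (γ σ) + D (γ σ) (γ t) :=
            hD_tri x₁ hx₁ (γ σ) (hγmem σ hσS.1) (γ t) (hγmem t htIcc)
        _ ≤ L * (σ * c) + L * (δ * c) := add_le_add hσS.2 hDstep
        _ = L * (t * c) := by rw [ht_def]; ring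
    have : t ≤ σ := le_csSup hScompact.bddAbove htS
    linarith
  have := hσS.2
  rw [hσ1, hγ1, one_mul] at this
  exact this
end

section
/- Let U ⊆ ℝ^m be open and convex and Ω ⊆ ℝ^n be open. Let u : U × Ω → ℝ be continuous and suppose: (i) there is K ≥ 0 with |u(x₁,y) − u(x₂,y)| ≤ K·‖x₁ − x₂‖ for all x₁, x₂ ∈ U and y ∈ Ω; (ii) for every x ∈ U the map y ↦ u(x,y) is differentiable and the gradient ∇_y u is continuous on U × Ω; (iii) for each x ∈ U the level set S_x := {y ∈ Ω : u(x,y) = 0} is nonempty and compact, the map x ↦ S_x is continuous with respect to the Hausdorff distance, and there is a compact set Q ⊆ Ω with S_x ⊆ Q for all x ∈ U; (iv) there is A > 0 with ‖∇_y u(x,y)‖ ≥ A whenever u(x,y) = 0. Then for all x₁, x₂ ∈ U the Hausdorff distance satisfies d_H(S_{x₁}, S_{x₂}) ≤ (2K/A)·‖x₁ − x₂‖; in particular the level-set distribution x ↦ S_x is Lipschitz in the Hausdorff distance. -/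
open Metric Set Filter Topology TopologicalSpace
open scoped RealInnerProductSpace

/-!
Fix `x₀ ∈ U`. By continuity of `∇_y u` and a Lebesgue number argument on the compact set `S x₀`,
there is `ρ > 0` such that near each `y₀ ∈ S x₀` a single unit vector `e` satisfies
`⟪∇_y u (x, z), e⟫ > A / 2` for all `x, z` within `ρ` of `x₀, y₀`. If `u x y = 0` then
`|u x' y| ≤ K ‖x - x'‖`, while along the line `y + t e` the function `u x'` grows at rate at least
`A / 2`, so it vanishes within distance `2 K ‖x - x'‖ / A` of `y`. Used in both directions
(Hausdorff continuity brings `S x` close to `S x₀`), this gives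
`d_H (S x, S x₀) ≤ (2K/A) ‖x - x₀‖` for `x` near `x₀`. A pointwise local bound of this kind
propagates along segments of the convex set `U` to a global one.
-/

theorem ContinuousAt.exists_norm_eq_one_eventually_lt_inner {X E : Type*} [TopologicalSpace X]
    [NormedAddCommGroup E] [InnerProductSpace ℝ E] {G : X → E} {p : X} {a : ℝ}
    (hG : ContinuousAt G p) (ha : 0 ≤ a) (hGp : a < ‖G p‖) :
    ∃ e : E, ‖e‖ = 1 ∧ ∀ᶠ q in 𝓝 p, a < ⟪G q, e⟫ := by
  have hne : G p ≠ 0 := norm_pos_iff.mp (ha.trans_lt hGp)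
  refine ⟨‖G p‖⁻¹ • G p, norm_smul_inv_norm hne, ?_⟩
  refine (hG.inner continuousAt_const).eventually (lt_mem_nhds ?_)
  show a < ⟪G p, ‖G p‖⁻¹ • G p⟫
  rwa [real_inner_smul_right, real_inner_self_eq_norm_sq, pow_two,
    inv_mul_cancel_left₀ (norm_ne_zero_iff.mpr hne)]

theorem IsCompact.exists_forall_ball_lt_inner {X E : Type*} [PseudoMetricSpace X]
    [NormedAddCommGroup E] [InnerProductSpace ℝ E] {G : X → E} {s O : Set X} {a : ℝ}
    (hs : IsCompact s) (hO : IsOpen O) (hsO : s ⊆ O) (hG : ContinuousOn G O) (ha : 0 ≤ a)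
    (hGs : ∀ p ∈ s, a < ‖G p‖) :
    ∃ ρ > 0, ∀ p ∈ s, ∃ e : E, ‖e‖ = 1 ∧ ∀ q ∈ ball p ρ, q ∈ O ∧ a < ⟪G q, e⟫ := by
  have hloc : ∀ p ∈ s, ∃ e : E, ‖e‖ = 1 ∧ ∀ᶠ q in 𝓝 p, q ∈ O ∧ a < ⟪G q, e⟫ := by
    intro p hp
    have hOp := hO.mem_nhds (hsO hp)
    obtain ⟨e, he, hev⟩ :=
      (hG.continuousAt hOp).exists_norm_eq_one_eventually_lt_inner ha (hGs p hp)
    exact ⟨e, he, Eventually.and hOp hev⟩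
  choose e he hev using hloc
  obtain ⟨ρ, hρ, hball⟩ := lebesgue_number_lemma_of_metric
    (c := fun p : s => interior {q | q ∈ O ∧ a < ⟪G q, e p p.2⟫}) hs (fun _ => isOpen_interior)
    (fun p hp => mem_iUnion.2 ⟨⟨p, hp⟩, mem_interior_iff_mem_nhds.2 (hev p hp)⟩)
  refine ⟨ρ, hρ, fun p hp => ?_⟩
  obtain ⟨p', hp'⟩ := hball p hp
  exact ⟨e p' p'.2, he _ _, fun q hq => by simpa using interior_subset (hp' hq)⟩

theorem exists_mem_Icc_eq_zero_of_le_deriv {φ φ' : ℝ → ℝ} {c τ : ℝ} (hτ : 0 ≤ τ)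
    (hφ : ∀ t ∈ Icc (-τ) τ, HasDerivAt φ (φ' t) t) (hc : ∀ t ∈ Icc (-τ) τ, c ≤ φ' t)
    (h0 : |φ 0| ≤ c * τ) : ∃ t ∈ Icc (-τ) τ, φ t = 0 := by
  have hcont : ContinuousOn φ (Icc (-τ) τ) :=
    fun t ht => (hφ t ht).continuousAt.continuousWithinAt
  have hgrowth := (convex_Icc (-τ) τ).mul_sub_le_image_sub_of_le_deriv hcont
    (fun t ht => (hφ t (interior_subset ht)).differentiableAt.differentiableWithinAt)
    (fun t ht => (hφ t (interior_subset ht)).deriv ▸ hc t (interior_subset ht))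
  have h0mem : (0 : ℝ) ∈ Icc (-τ) τ := ⟨by linarith, hτ⟩
  have hleft := hgrowth (-τ) (left_mem_Icc.2 (by linarith)) 0 h0mem (by linarith)
  have hright := hgrowth 0 h0mem τ (right_mem_Icc.2 (by linarith)) hτ
  obtain ⟨h0l, h0r⟩ := abs_le.1 h0
  exact intermediate_value_Icc (by linarith) hcont ⟨by linarith, by linarith⟩

theorem exists_mem_closedBall_eq_zero_of_le_inner_gradient {F : Type*} [NormedAddCommGroup F]
    [InnerProductSpace ℝ F] [CompleteSpace F] {v : F → ℝ} {G : F → F} {y e : F} {c τ : ℝ}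
    (he : ‖e‖ = 1) (hτ : 0 ≤ τ)
    (hG : ∀ z ∈ closedBall y τ, HasGradientAt v (G z) z ∧ c ≤ ⟪G z, e⟫)
    (hy : |v y| ≤ c * τ) : ∃ z ∈ closedBall y τ, v z = 0 := by
  have hseg : ∀ t ∈ Icc (-τ) τ, y + t • e ∈ closedBall y τ := fun t ht => by
    rw [mem_closedBall, dist_self_add_left, norm_smul, he, mul_one, Real.norm_eq_abs]
    exact abs_le.2 ht
  have hderiv : ∀ t ∈ Icc (-τ) τ,
      HasDerivAt (fun t => v (y + t • e)) ⟪G (y + t • e), e⟫ t := fun t ht => by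
    have hline : HasDerivAt (fun t : ℝ => y + t • e) e t := by
      simpa using ((hasDerivAt_id t).smul_const e).const_add y
    exact (hG _ (hseg t ht)).1.hasFDerivAt.comp_hasDerivAt t hline
  obtain ⟨t, ht, hzero⟩ := exists_mem_Icc_eq_zero_of_le_deriv hτ hderiv
    (fun t ht => (hG _ (hseg t ht)).2) (by simpa using hy)
  exact ⟨_, hseg t ht, hzero⟩

theorem dist_le_mul_sub_of_eventually_dist_le_right {Y : Type*} [PseudoMetricSpace Y]
    {φ : ℝ → Y} {a b L : ℝ} (hφ : ContinuousOn φ (Icc a b))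
    (hL : ∀ t ∈ Ico a b, ∀ᶠ z in 𝓝[>] t, dist (φ z) (φ t) ≤ L * (z - t)) :
    ∀ t ∈ Icc a b, dist (φ t) (φ a) ≤ L * (t - a) := by
  refine fun t ht => image_le_of_liminf_slope_right_le_deriv_boundary
    (f := fun t => dist (φ t) (φ a)) (B := fun t => L * (t - a)) (B' := fun _ => L)
    (continuous_dist.comp_continuousOn (hφ.prodMk continuousOn_const)) (by simp)
    (by fun_prop) (fun t _ => ?_) (fun t ht r hr => ?_) ht
  · simpa using ((hasDerivWithinAt_id t _).sub_const a).const_mul L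
  · refine (((hL t ht).and self_mem_nhdsWithin).mono fun z ⟨hz, htz⟩ => ?_).frequently
    rw [slope_def_field]
    refine lt_of_le_of_lt ((div_le_iff₀ (sub_pos.2 htz)).2 ?_) hr
    linarith [dist_triangle (φ z) (φ t) (φ a)]

theorem Convex.dist_le_mul_dist_of_eventually_dist_le {E Y : Type*} [NormedAddCommGroup E]
    [NormedSpace ℝ E] [PseudoMetricSpace Y] {s : Set E} (hs : Convex ℝ s) {F : E → Y} {C : ℝ}
    (hF : ∀ x₀ ∈ s, ∀ᶠ x in 𝓝[s] x₀, dist (F x) (F x₀) ≤ C * dist x x₀)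
    {x y : E} (hx : x ∈ s) (hy : y ∈ s) : dist (F x) (F y) ≤ C * dist x y := by
  have hγ : MapsTo (AffineMap.lineMap y x) (Icc (0 : ℝ) 1) s := hs.mapsTo_lineMap hy hx
  have hFcont : ContinuousOn F s := fun x₀ hx₀ => by
    rw [ContinuousWithinAt, tendsto_iff_dist_tendsto_zero]
    refine squeeze_zero' (Eventually.of_forall fun _ => dist_nonneg) (hF x₀ hx₀) ?_
    simpa using ((tendsto_id.dist (tendsto_const_nhds (x := x₀))).const_mul C).mono_left
      (nhdsWithin_le_nhds (s := s) (a := x₀))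
  have hright : ∀ t ∈ Ico (0 : ℝ) 1, ∀ᶠ z in 𝓝[>] t,
      dist (F (AffineMap.lineMap y x z)) (F (AffineMap.lineMap y x t)) ≤
        C * dist x y * (z - t) := by
    intro t ht
    have hT : Tendsto (AffineMap.lineMap y x) (𝓝[>] t) (𝓝[s] (AffineMap.lineMap y x t)) :=
      tendsto_nhdsWithin_iff.2 ⟨(AffineMap.lineMap_continuous.tendsto t).mono_left
        nhdsWithin_le_nhds, mem_of_superset (Icc_mem_nhdsGT_of_mem ht) hγ⟩
    filter_upwards [hT.eventually (hF _ (hγ (Ico_subset_Icc_self ht))), self_mem_nhdsWithin]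
      with z hz htz
    rw [dist_lineMap_lineMap, Real.dist_eq, abs_of_pos (sub_pos.2 htz), dist_comm y x] at hz
    linarith
  simpa using dist_le_mul_sub_of_eventually_dist_le_right
    (hFcont.comp AffineMap.lineMap_continuous.continuousOn hγ) hright 1
    (right_mem_Icc.2 zero_le_one)

theorem IsCompact.exists_forall_ball_prod_lt_inner {E F : Type*} [PseudoMetricSpace E]
    [NormedAddCommGroup F] [InnerProductSpace ℝ F] {U : Set E} {Ω T : Set F} (hU : IsOpen U)
    (hΩ : IsOpen Ω) {g : E → F → F} (hg : ContinuousOn (fun p => g p.1 p.2) (U ×ˢ Ω))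
    {a : ℝ} (ha : 0 ≤ a) {x₀ : E} (hx₀ : x₀ ∈ U) (hT : IsCompact T) (hTΩ : T ⊆ Ω)
    (hTg : ∀ y ∈ T, a < ‖g x₀ y‖) :
    ∃ ρ > 0, ∀ y₀ ∈ T, ∃ e : F, ‖e‖ = 1 ∧
      ∀ x ∈ ball x₀ ρ, ∀ z ∈ ball y₀ ρ, (x ∈ U ∧ z ∈ Ω) ∧ a < ⟪g x z, e⟫ := by
  obtain ⟨ρ, hρ, hball⟩ := (isCompact_singleton.prod hT).exists_forall_ball_lt_inner
    (G := fun p : E × F => g p.1 p.2) (hU.prod hΩ) (prod_mono (singleton_subset_iff.2 hx₀) hTΩ)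
    hg ha (by rintro ⟨x, y⟩ ⟨rfl, hy⟩; exact hTg y hy)
  refine ⟨ρ, hρ, fun y₀ hy₀ => ?_⟩
  obtain ⟨e, he, hball⟩ := hball (x₀, y₀) ⟨rfl, hy₀⟩
  exact ⟨e, he, fun x hx z hz => hball (x, z) (by rw [← ball_prod_same]; exact ⟨hx, hz⟩)⟩

theorem eventually_hausdorffDist_levelSet_le {E F : Type*} [NormedAddCommGroup E]
    [NormedSpace ℝ E] [NormedAddCommGroup F] [InnerProductSpace ℝ F] [CompleteSpace F]
    {U : Set E} {Ω : Set F} (hU : IsOpen U) (hΩ : IsOpen Ω) {u : E → F → ℝ} {g : E → F → F}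
    {K A : ℝ} (hK : 0 ≤ K) (hA : 0 < A)
    (hu_lip : ∀ x₁ ∈ U, ∀ x₂ ∈ U, ∀ y ∈ Ω, |u x₁ y - u x₂ y| ≤ K * ‖x₁ - x₂‖)
    (hg : ∀ x ∈ U, ∀ y ∈ Ω, HasGradientAt (u x) (g x y) y)
    (hg_cont : ContinuousOn (fun p => g p.1 p.2) (U ×ˢ Ω))
    (hgA : ∀ x ∈ U, ∀ y ∈ Ω, u x y = 0 → A ≤ ‖g x y‖)
    {S : E → Set F} (hS : ∀ x, S x = {y ∈ Ω | u x y = 0}) {x₀ : E} (hx₀ : x₀ ∈ U)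
    (hS_cpt : IsCompact (S x₀)) (hS_usc : ∀ ρ > 0, ∀ᶠ x in 𝓝 x₀, S x ⊆ thickening ρ (S x₀)) :
    ∀ᶠ x in 𝓝 x₀, hausdorffDist (S x) (S x₀) ≤ 2 * K / A * dist x x₀ := by
  obtain ⟨ρ, hρ, hρS⟩ := hS_cpt.exists_forall_ball_prod_lt_inner hU hΩ hg_cont (half_pos hA).le
    hx₀ (fun y hy => by rw [hS] at hy; exact hy.1)
    (fun y hy => by rw [hS] at hy; linarith [hgA x₀ hx₀ y hy.1 hy.2])
  -- A zero `y` of `u x` is moved to a zero of `u x'` along the transversal direction at `y₀`: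
  -- `|u x' y| ≤ K * dist x x'` and `u x'` grows at rate `A / 2` along that direction.
  have cross : ∀ y₀ ∈ S x₀, ∀ x ∈ ball x₀ ρ, ∀ x' ∈ ball x₀ ρ, ∀ y ∈ S x,
      closedBall y (2 * K / A * dist x x') ⊆ ball y₀ ρ →
        ∃ z ∈ S x', dist y z ≤ 2 * K / A * dist x x' := by
    intro y₀ hy₀ x hx x' hx' y hy hsub
    obtain ⟨e, he, hmem⟩ := hρS y₀ hy₀
    have hxU := (hmem x hx y₀ (mem_ball_self hρ)).1.1
    have hx'U := (hmem x' hx' y₀ (mem_ball_self hρ)).1.1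
    rw [hS] at hy
    have hstart : |u x' y| ≤ A / 2 * (2 * K / A * dist x x') := by
      have := hu_lip x' hx'U x hxU y hy.1
      rw [hy.2, sub_zero, ← dist_eq_norm, dist_comm] at this
      calc |u x' y| ≤ K * dist x x' := this
        _ = A / 2 * (2 * K / A * dist x x') := by field_simp
    obtain ⟨z, hz, hz0⟩ := exists_mem_closedBall_eq_zero_of_le_inner_gradient he (by positivity)
      (fun z hz => ⟨hg x' hx'U z (hmem x' hx' z (hsub hz)).1.2,
        (hmem x' hx' z (hsub hz)).2.le⟩) hstart
    refine ⟨z, ?_, by rwa [dist_comm, ← mem_closedBall]⟩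
    rw [hS]
    exact ⟨(hmem x' hx' z (hsub hz)).1.2, hz0⟩
  have hsmall : ∀ᶠ x in 𝓝 x₀, 2 * K / A * dist x x₀ < ρ / 2 := by
    have : Tendsto (fun x => 2 * K / A * dist x x₀) (𝓝 x₀) (𝓝 0) := by
      simpa using ((tendsto_id (x := 𝓝 x₀)).dist (tendsto_const_nhds (x := x₀))).const_mul
        (2 * K / A)
    exact this.eventually (gt_mem_nhds (half_pos hρ))
  filter_upwards [ball_mem_nhds x₀ hρ, hS_usc (ρ / 2) (half_pos hρ), hsmall] with x hx hxS hxρ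
  refine hausdorffDist_le_of_mem_dist (by positivity) (fun y hy => ?_) (fun y₀ hy₀ => ?_)
  · obtain ⟨y₀, hy₀, hyy₀⟩ := mem_thickening_iff.1 (hxS hy)
    exact cross y₀ hy₀ x hx x₀ (mem_ball_self hρ) y hy (closedBall_subset_ball' (by linarith))
  · rw [dist_comm x]
    refine cross y₀ hy₀ x₀ (mem_ball_self hρ) x hx y₀ hy₀ (closedBall_subset_ball' ?_)
    rw [dist_self, dist_comm]
    linarith

theorem levelSet_lipschitz_hausdorff_general
    {m n : ℕ}
    (U : Set (EuclideanSpace ℝ (Fin m))) (hU_open : IsOpen U) (hU_conv : Convex ℝ U)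
    (Ω : Set (EuclideanSpace ℝ (Fin n))) (hΩ_open : IsOpen Ω)
    (u : EuclideanSpace ℝ (Fin m) → EuclideanSpace ℝ (Fin n) → ℝ)
    (K : ℝ) (hK : 0 ≤ K)
    (hu_lip : ∀ x₁ ∈ U, ∀ x₂ ∈ U, ∀ y ∈ Ω, |u x₁ y - u x₂ y| ≤ K * ‖x₁ - x₂‖)
    (g : EuclideanSpace ℝ (Fin m) → EuclideanSpace ℝ (Fin n) →
      EuclideanSpace ℝ (Fin n))
    (hg : ∀ x ∈ U, ∀ y ∈ Ω, HasGradientAt (u x) (g x y) y)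
    (hg_cont : ContinuousOn (fun p => g p.1 p.2) (U ×ˢ Ω))
    (S : EuclideanSpace ℝ (Fin m) → Set (EuclideanSpace ℝ (Fin n)))
    (hS_def : ∀ x, S x = {y ∈ Ω | u x y = 0})
    (hS_ne : ∀ x ∈ U, (S x).Nonempty)
    (hS_cpt : ∀ x ∈ U, IsCompact (S x))
    (hS_hcont : ∀ x ∈ U, ∀ ε > (0 : ℝ), ∃ δ > (0 : ℝ), ∀ x' ∈ U,
      ‖x' - x‖ < δ → hausdorffDist (S x') (S x) < ε)
    (A : ℝ) (hA : 0 < A)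
    (hgA : ∀ x ∈ U, ∀ y ∈ Ω, u x y = 0 → A ≤ ‖g x y‖) :
    ∀ x₁ ∈ U, ∀ x₂ ∈ U,
      hausdorffDist (S x₁) (S x₂) ≤ (2 * K / A) * ‖x₁ - x₂‖ := by
  classical
  intro x₁ hx₁ x₂ hx₂
  -- The distance of `NonemptyCompacts` is `hausdorffDist`; the value off `U` is never used.
  let T : EuclideanSpace ℝ (Fin m) → NonemptyCompacts (EuclideanSpace ℝ (Fin n)) := fun x =>
    if hx : x ∈ U then ⟨⟨S x, hS_cpt x hx⟩, hS_ne x hx⟩ else default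
  have hT : ∀ x ∈ U, ∀ x' ∈ U, dist (T x) (T x') = hausdorffDist (S x) (S x') :=
    fun x hx x' hx' => by simp [T, hx, hx', NonemptyCompacts.dist_eq]
  have hS_usc : ∀ x₀ ∈ U, ∀ ρ > 0, ∀ᶠ x in 𝓝 x₀, S x ⊆ thickening ρ (S x₀) := by
    intro x₀ hx₀ ρ hρ
    obtain ⟨δ, hδ, hδS⟩ := hS_hcont x₀ hx₀ ρ hρ
    filter_upwards [hU_open.mem_nhds hx₀, ball_mem_nhds x₀ hδ] with x hx hxδ y hy
    refine mem_thickening_iff.2 (exists_dist_lt_of_hausdorffDist_lt hy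
      (hδS x hx (mem_ball_iff_norm.1 hxδ)) ?_)
    exact hausdorffEDist_ne_top_of_nonempty_of_bounded (hS_ne x hx) (hS_ne x₀ hx₀)
      (hS_cpt x hx).isBounded (hS_cpt x₀ hx₀).isBounded
  have hlocal : ∀ x₀ ∈ U, ∀ᶠ x in 𝓝[U] x₀, dist (T x) (T x₀) ≤ 2 * K / A * dist x x₀ := by
    intro x₀ hx₀
    filter_upwards [self_mem_nhdsWithin, eventually_nhdsWithin_of_eventually_nhds
      (eventually_hausdorffDist_levelSet_le hU_open hΩ_open hK hA hu_lip hg hg_cont hgA hS_def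
        hx₀ (hS_cpt x₀ hx₀) (hS_usc x₀ hx₀))] with x hx hxS
    rwa [hT x hx x₀ hx₀]
  rw [← hT x₁ hx₁ x₂ hx₂, ← dist_eq_norm]
  exact hU_conv.dist_le_mul_dist_of_eventually_dist_le hlocal hx₁ hx₂

/-- **Lipschitz dependence of level sets in the Hausdorff distance (Theorem 4.3,
Euclidean content).** Let `U ⊆ ℝ^m` be open convex, `Ω ⊆ ℝ^n` open, and
`u : U × Ω → ℝ` continuous, Lipschitz in `x` with constant `K`, differentiable in `y`
with continuous gradient `∇_y u`, whose level sets `S x = {y ∈ Ω : u x y = 0}` are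
nonempty, compact, contained in a fixed compact `Q`, and vary continuously in the
Hausdorff distance, and with `‖∇_y u‖ ≥ A > 0` on the zero set. Then
`d_H (S x₁, S x₂) ≤ (2K/A) * ‖x₁ − x₂‖` for all `x₁, x₂ ∈ U`. -/
theorem levelSet_lipschitz_hausdorff
    {m n : ℕ}
    (U : Set (EuclideanSpace ℝ (Fin m))) (hU_open : IsOpen U) (hU_conv : Convex ℝ U)
    (Ω : Set (EuclideanSpace ℝ (Fin n))) (hΩ_open : IsOpen Ω)
    (u : EuclideanSpace ℝ (Fin m) → EuclideanSpace ℝ (Fin n) → ℝ)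
    (hu_cont : ContinuousOn (fun p => u p.1 p.2) (U ×ˢ Ω))
    (K : ℝ) (hK : 0 ≤ K)
    (hu_lip : ∀ x₁ ∈ U, ∀ x₂ ∈ U, ∀ y ∈ Ω, |u x₁ y - u x₂ y| ≤ K * ‖x₁ - x₂‖)
    (g : EuclideanSpace ℝ (Fin m) → EuclideanSpace ℝ (Fin n) →
      EuclideanSpace ℝ (Fin n))
    (hg : ∀ x ∈ U, ∀ y ∈ Ω, HasGradientAt (u x) (g x y) y)
    (hg_cont : ContinuousOn (fun p => g p.1 p.2) (U ×ˢ Ω))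
    (S : EuclideanSpace ℝ (Fin m) → Set (EuclideanSpace ℝ (Fin n)))
    (hS_def : ∀ x, S x = {y ∈ Ω | u x y = 0})
    (hS_ne : ∀ x ∈ U, (S x).Nonempty)
    (hS_cpt : ∀ x ∈ U, IsCompact (S x))
    (hS_hcont : ∀ x ∈ U, ∀ ε > (0 : ℝ), ∃ δ > (0 : ℝ), ∀ x' ∈ U,
      ‖x' - x‖ < δ → hausdorffDist (S x') (S x) < ε)
    (Q : Set (EuclideanSpace ℝ (Fin n))) (hQ_cpt : IsCompact Q) (hQ_sub : Q ⊆ Ω)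
    (hSQ : ∀ x ∈ U, S x ⊆ Q)
    (A : ℝ) (hA : 0 < A)
    (hgA : ∀ x ∈ U, ∀ y ∈ Ω, u x y = 0 → A ≤ ‖g x y‖) :
    ∀ x₁ ∈ U, ∀ x₂ ∈ U,
      hausdorffDist (S x₁) (S x₂) ≤ (2 * K / A) * ‖x₁ - x₂‖ :=
  levelSet_lipschitz_hausdorff_general U hU_open hU_conv Ω hΩ_open u K hK hu_lip g hg hg_cont S
    hS_def hS_ne hS_cpt hS_hcont A hA hgA
end

section
/- On ℝ^{n+1}, let C be a continuous proper cone distribution and let F be a fundamental function for C with F(x,v) > 0 whenever v ∈ Int C_x. Let p, q ∈ ℝ^{n+1} with finite Lorentz–Finsler distance d(p,q), and assume that for every R < d(p,q) there exists a piecewise C¹ curve x : [0,1] → ℝ^{n+1} from p to q with x'(t) ∈ Int C_{x(t)} for all t and ℓ(x) > R. Let Γ = (γ, z) : [0,1] → ℝ^{n+1} × ℝ be a Lipschitz curve with γ(0) = p, γ(1) = q, and γ'(t) ∈ C_{γ(t)} and |z'(t)| ≤ F(γ(t),γ'(t)) for almost every t (i.e. Γ is a continuous causal curve for the product cone structure C^×).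 If Γ is achronal, then γ is a maximizing causal curve: ℓ(γ) = d(p,q). -/
/-!
Along `Γ`, `|z'| ≤ F(γ, γ')`, so `|z 1 - z 0| ≤ ℓ(γ) ≤ d`. Conversely, a timelike curve `x` from
`p` to `q` with `ℓ(x) > |z 1 - z 0|` lifts to the product timelike curve `(x, w)` from
`(p, z 0)` to `(q, z 1)`, where `w` is `z 0` plus the arc length of `x` rescaled by
`(z 1 - z 0) / ℓ(x)`; achronality forbids this, and since such `x` exist as soon as
`|z 1 - z 0| < d`, also `d ≤ |z 1 - z 0|`.
-/

open MeasureTheory Set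

/-- A (continuous) causal curve for the cone distribution `C`: a Lipschitz curve
`γ : [a,b] → E` whose derivative exists and lies in `C (γ t)` for almost every `t`. -/
def IsCausalCurve {E : Type*} [NormedAddCommGroup E] [NormedSpace ℝ E]
    (C : E → Set E) (γ : ℝ → E) (a b : ℝ) : Prop :=
  (∃ K : NNReal, LipschitzOnWith K γ (Set.Icc a b)) ∧
  ∀ᵐ t ∂(volume.restrict (Set.Icc a b)),
    HasDerivWithinAt γ (derivWithin γ (Set.Icc a b) t) (Set.Icc a b) t ∧
    derivWithin γ (Set.Icc a b) t ∈ C (γ t)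

/-- The Lorentz–Finsler length `ℓ(γ) = ∫_a^b F (γ t) (γ' t) dt` of a curve. -/
noncomputable def curveLength {E : Type*} [NormedAddCommGroup E] [NormedSpace ℝ E]
    (F : E → E → ℝ) (γ : ℝ → E) (a b : ℝ) : ℝ :=
  ∫ t in Set.Icc a b, F (γ t) (derivWithin γ (Set.Icc a b) t)

/-- `x : [0,1] → E` is piecewise `C¹` and timelike with respect to the partition
`0 = τ 0 < τ 1 < ⋯ < τ (m+1) = 1`: on each piece it is `C¹` with derivative in the
interior of the cone. -/
def IsPiecewiseTimelike {E : Type*} [NormedAddCommGroup E] [NormedSpace ℝ E]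
    (C : E → Set E) (x : ℝ → E) (m : ℕ) (τ : Fin (m + 2) → ℝ) : Prop :=
  StrictMono τ ∧ τ 0 = 0 ∧ τ (Fin.last (m + 1)) = 1 ∧
  ∀ i : Fin (m + 1),
    ContDiffOn ℝ 1 x (Set.Icc (τ i.castSucc) (τ i.succ)) ∧
    ∀ t ∈ Set.Icc (τ i.castSucc) (τ i.succ),
      derivWithin x (Set.Icc (τ i.castSucc) (τ i.succ)) t ∈ interior (C (x t))

/-- The length of a piecewise `C¹` curve, computed piece by piece. -/
noncomputable def piecewiseLength {E : Type*} [NormedAddCommGroup E] [NormedSpace ℝ E]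
    (F : E → E → ℝ) (x : ℝ → E) (m : ℕ) (τ : Fin (m + 2) → ℝ) : ℝ :=
  ∑ i : Fin (m + 1), ∫ t in Set.Icc (τ i.castSucc) (τ i.succ),
    F (x t) (derivWithin x (Set.Icc (τ i.castSucc) (τ i.succ)) t)

/-- A product timelike curve `Λ = (lam, w) : [0,1] → E × ℝ` for the product cone
structure `C^×`: piecewise `C¹` with `lam' ∈ Int C` and `|w'| < F (lam, lam')`. -/
def IsProductTimelike {E : Type*} [NormedAddCommGroup E] [NormedSpace ℝ E]
    (C : E → Set E) (F : E → E → ℝ) (lam : ℝ → E) (w : ℝ → ℝ) : Prop :=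
  ∃ (m : ℕ) (τ : Fin (m + 2) → ℝ), StrictMono τ ∧ τ 0 = 0 ∧ τ (Fin.last (m + 1)) = 1 ∧
    ∀ i : Fin (m + 1),
      ContDiffOn ℝ 1 lam (Set.Icc (τ i.castSucc) (τ i.succ)) ∧
      ContDiffOn ℝ 1 w (Set.Icc (τ i.castSucc) (τ i.succ)) ∧
      ∀ t ∈ Set.Icc (τ i.castSucc) (τ i.succ),
        derivWithin lam (Set.Icc (τ i.castSucc) (τ i.succ)) t ∈ interior (C (lam t)) ∧
        |derivWithin w (Set.Icc (τ i.castSucc) (τ i.succ)) t| <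
          F (lam t) (derivWithin lam (Set.Icc (τ i.castSucc) (τ i.succ)) t)

open Topology

theorem ae_restrict_Icc_mem_nhds (a b : ℝ) :
    ∀ᵐ t ∂(volume.restrict (Icc a b)), Icc a b ∈ 𝓝 t := by
  rw [Measure.restrict_congr_set Ioo_ae_eq_Icc.symm]
  filter_upwards [ae_restrict_mem measurableSet_Ioo] with t ht
  exact Icc_mem_nhds ht.1 ht.2

theorem derivWithin_Icc_ae_eq_deriv {E : Type*} [NormedAddCommGroup E] [NormedSpace ℝ E]
    (f : ℝ → E) (a b : ℝ) :
    derivWithin f (Icc a b) =ᵐ[volume.restrict (Icc a b)] deriv f := by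
  filter_upwards [ae_restrict_Icc_mem_nhds a b] with t ht
  exact derivWithin_of_mem_nhds ht

theorem LipschitzOnWith.ae_norm_derivWithin_Icc_le {E : Type*} [NormedAddCommGroup E]
    [NormedSpace ℝ E] {f : ℝ → E} {K : NNReal} {a b : ℝ} (hf : LipschitzOnWith K f (Icc a b)) :
    ∀ᵐ t ∂(volume.restrict (Icc a b)), ‖derivWithin f (Icc a b) t‖ ≤ K := by
  filter_upwards [ae_restrict_Icc_mem_nhds a b] with t ht
  rw [derivWithin_of_mem_nhds ht]
  exact norm_deriv_le_of_lipschitzOn ht hf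

theorem LipschitzOnWith.integral_derivWithin_Icc {f : ℝ → ℝ} {K : NNReal} {a b : ℝ}
    (hab : a ≤ b) (hf : LipschitzOnWith K f (Icc a b)) :
    ∫ t in Icc a b, derivWithin f (Icc a b) t = f b - f a := by
  rw [integral_congr_ae (derivWithin_Icc_ae_eq_deriv f a b), integral_Icc_eq_integral_Ioc,
    ← intervalIntegral.integral_of_le hab]
  rw [← uIcc_of_le hab] at hf
  exact hf.absolutelyContinuousOnInterval.integral_deriv_eq_sub

theorem abs_sub_le_curveLength {E : Type*} [NormedAddCommGroup E] [NormedSpace ℝ E]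
    {F : E → E → ℝ} {γ : ℝ → E} {z : ℝ → ℝ} {K : NNReal} {a b : ℝ} (hab : a ≤ b)
    (hz : LipschitzOnWith K z (Icc a b))
    (hγ : IntegrableOn (fun t => F (γ t) (derivWithin γ (Icc a b) t)) (Icc a b))
    (hz_le : ∀ᵐ t ∂(volume.restrict (Icc a b)),
      |derivWithin z (Icc a b) t| ≤ F (γ t) (derivWithin γ (Icc a b) t)) :
    |z b - z a| ≤ curveLength F γ a b := by
  rw [← hz.integral_derivWithin_Icc hab]
  calc |∫ t in Icc a b, derivWithin z (Icc a b) t|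
      ≤ ∫ t in Icc a b, |derivWithin z (Icc a b) t| := abs_integral_le_integral_abs
    _ ≤ curveLength F γ a b :=
      integral_mono_of_nonneg (ae_of_all _ fun _ => abs_nonneg _) hγ hz_le

theorem ContinuousOn.comp_aestronglyMeasurable_of_ae_mem {α β γ : Type*} [MeasurableSpace α]
    [TopologicalSpace β] [MeasurableSpace β] [OpensMeasurableSpace β] [TopologicalSpace γ]
    [TopologicalSpace.PseudoMetrizableSpace γ] [SecondCountableTopologyEither β γ] {μ : Measure α}
    {g : β → γ} {s : Set β} (hg : ContinuousOn g s) (hs : MeasurableSet s)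
    {f : α → β} (hf : AEMeasurable f μ) (hfs : ∀ᵐ x ∂μ, f x ∈ s) :
    AEStronglyMeasurable (g ∘ f) μ := by
  have hg_meas := hg.aestronglyMeasurable hs (μ := μ.map f)
  rw [Measure.restrict_eq_self_of_ae_mem ((ae_map_iff hf hs).2 hfs)] at hg_meas
  exact hg_meas.comp_aemeasurable hf

section ConeDistribution

variable {E : Type*} [NormedAddCommGroup E] {C : E → Set E}

theorem measurableSet_coneBundle [MeasurableSpace E] [OpensMeasurableSpace (E × E)]
    (hC_zero : ∀ x, (0 : E) ∉ C x)
    (hC_bundle_closed :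
      ∀ p : E × E, p.2 ≠ 0 → p ∈ closure {q : E × E | q.2 ∈ C q.1} → p.2 ∈ C p.1) :
    MeasurableSet {p : E × E | p.2 ∈ C p.1} := by
  have h : {p : E × E | p.2 ∈ C p.1} = closure {p : E × E | p.2 ∈ C p.1} \ {p | p.2 = 0} :=
    Subset.antisymm (fun p hp => ⟨subset_closure hp, fun h0 => hC_zero p.1 (h0 ▸ hp)⟩)
      fun p hp => hC_bundle_closed p hp.2 hp.1
  rw [h]
  exact isClosed_closure.measurableSet.diff
    (isClosed_eq continuous_snd continuous_const).measurableSet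

/-- `M` is the maximum of `|F|` on the unit cone vectors over `K`, a compact set because the cone
bundle is closed away from the zero section. -/
theorem exists_abs_le_mul_norm_of_isCompact [NormedSpace ℝ E] [ProperSpace E] {F : E → E → ℝ}
    (hC_zero : ∀ x, (0 : E) ∉ C x) (hC_smul : ∀ x, ∀ c : ℝ, 0 < c → ∀ v ∈ C x, c • v ∈ C x)
    (hC_bundle_closed : ∀ p : E × E, p.2 ≠ 0 → p ∈ closure {q : E × E | q.2 ∈ C q.1} → p.2 ∈ C p.1)
    (hF_cont : ContinuousOn (fun p => F p.1 p.2) {p : E × E | p.2 ∈ C p.1})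
    (hF_hom : ∀ x, ∀ c : ℝ, 0 < c → ∀ v ∈ C x, F x (c • v) = c * F x v)
    {K : Set E} (hK : IsCompact K) :
    ∃ M, 0 ≤ M ∧ ∀ x ∈ K, ∀ v ∈ C x, |F x v| ≤ M * ‖v‖ := by
  set U := K ×ˢ Metric.sphere (0 : E) 1 ∩ closure {q : E × E | q.2 ∈ C q.1}
  have hU_sub : U ⊆ {p : E × E | p.2 ∈ C p.1} := fun p hp =>
    hC_bundle_closed p (ne_zero_of_mem_unit_sphere ⟨p.2, hp.1.2⟩) hp.2
  obtain ⟨M, hM⟩ := ((hK.prod (isCompact_sphere 0 1)).inter_right isClosed_closure)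
    |>.exists_bound_of_continuousOn (hF_cont.mono hU_sub)
  refine ⟨max M 0, le_max_right _ _, fun x hx v hv => ?_⟩
  have hv_pos : 0 < ‖v‖ := norm_pos_iff.2 fun h => hC_zero x (h ▸ hv)
  have hu : ‖v‖⁻¹ • v ∈ C x := hC_smul x _ (inv_pos.2 hv_pos) v hv
  have hFu : |F x (‖v‖⁻¹ • v)| ≤ max M 0 :=
    (hM (x, _) ⟨⟨hx, by simp [norm_smul, hv_pos.ne']⟩, subset_closure hu⟩).trans (le_max_left _ _)
  have hFv : F x v = ‖v‖ * F x (‖v‖⁻¹ • v) := by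
    rw [← hF_hom x _ hv_pos _ hu, smul_inv_smul₀ hv_pos.ne']
  rw [hFv, abs_mul, abs_norm, mul_comm]
  exact mul_le_mul_of_nonneg_right hFu (norm_nonneg _)

theorem IsCausalCurve.integrableOn_length [NormedSpace ℝ E] [FiniteDimensional ℝ E]
    [MeasurableSpace E] [BorelSpace E] {F : E → E → ℝ}
    (hC_zero : ∀ x, (0 : E) ∉ C x) (hC_smul : ∀ x, ∀ c : ℝ, 0 < c → ∀ v ∈ C x, c • v ∈ C x)
    (hC_bundle_closed : ∀ p : E × E, p.2 ≠ 0 → p ∈ closure {q : E × E | q.2 ∈ C q.1} → p.2 ∈ C p.1)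
    (hF_cont : ContinuousOn (fun p => F p.1 p.2) {p : E × E | p.2 ∈ C p.1})
    (hF_hom : ∀ x, ∀ c : ℝ, 0 < c → ∀ v ∈ C x, F x (c • v) = c * F x v)
    {σ : ℝ → E} {a b : ℝ} (hσ : IsCausalCurve C σ a b) :
    IntegrableOn (fun t => F (σ t) (derivWithin σ (Icc a b) t)) (Icc a b) := by
  obtain ⟨⟨K, hK⟩, hσC⟩ := hσ
  obtain ⟨M, hM0, hM⟩ := exists_abs_le_mul_norm_of_isCompact hC_zero hC_smul hC_bundle_closed
    hF_cont hF_hom (isCompact_Icc.image_of_continuousOn hK.continuousOn)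
  have hderiv := derivWithin_Icc_ae_eq_deriv σ a b
  have hmeas : AEStronglyMeasurable (fun t => F (σ t) (deriv σ t)) (volume.restrict (Icc a b)) :=
    hF_cont.comp_aestronglyMeasurable_of_ae_mem
      (measurableSet_coneBundle hC_zero hC_bundle_closed)
      ((hK.continuousOn.aemeasurable measurableSet_Icc).prodMk (measurable_deriv σ).aemeasurable)
      (by filter_upwards [hσC, hderiv] with t ht hdt; exact hdt ▸ ht.2)
  refine Integrable.mono' (integrable_const (M * K))
    (hmeas.congr (hderiv.mono fun t ht => by simp only [ht])) ?_
  filter_upwards [hσC, hK.ae_norm_derivWithin_Icc_le, ae_restrict_mem measurableSet_Icc]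
    with t ht hnorm hmem
  calc ‖F (σ t) (derivWithin σ (Icc a b) t)‖ ≤ M * ‖derivWithin σ (Icc a b) t‖ :=
        hM _ (mem_image_of_mem σ hmem) _ ht.2
    _ ≤ M * K := mul_le_mul_of_nonneg_left hnorm hM0

end ConeDistribution

section PiecewisePrimitive

variable {m : ℕ} {τ : Fin (m + 2) → ℝ}

theorem exists_piecewise_primitive (hτ : StrictMono τ) {f : Fin (m + 1) → ℝ → ℝ}
    (hf : ∀ i, ContinuousOn (f i) (Icc (τ i.castSucc) (τ i.succ))) :
    ∃ W : ℝ → ℝ, W (τ 0) = 0 ∧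
      W (τ (Fin.last (m + 1))) = ∑ i, ∫ t in Icc (τ i.castSucc) (τ i.succ), f i t ∧
      ∀ i, ContDiffOn ℝ 1 W (Icc (τ i.castSucc) (τ i.succ)) ∧
        ∀ t ∈ Icc (τ i.castSucc) (τ i.succ),
          HasDerivWithinAt W (f i t) (Icc (τ i.castSucc) (τ i.succ)) t := by
  have hlt : ∀ i : Fin (m + 1), τ i.castSucc ≤ τ i.succ := fun i => (hτ i.castSucc_lt_succ).le
  set g : Fin (m + 1) → ℝ → ℝ := fun i => IccExtend (hlt i) ((Icc _ _).domRestrict (f i))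
  have hg_cont : ∀ i, Continuous (g i) := fun i =>
    continuous_IccExtend_iff.2 (hf i).domRestrict
  have hg_eq : ∀ i, EqOn (g i) (f i) (Icc (τ i.castSucc) (τ i.succ)) := fun i t ht =>
    IccExtend_of_mem _ _ ht
  set G : Fin (m + 1) → ℝ → ℝ := fun i t =>
    ∫ s in τ i.castSucc..(projIcc _ _ (hlt i) t : ℝ), g i s
  have hG_left : ∀ i t, t ≤ τ i.castSucc → G i t = 0 := fun i t ht => by
    simp only [G, projIcc_of_le_left _ ht, intervalIntegral.integral_same]
  have hG_right : ∀ i t, τ i.succ ≤ t → G i t = ∫ s in Icc (τ i.castSucc) (τ i.succ), f i s :=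
    fun i t ht => by
      simp only [G, projIcc_of_right_le _ ht, intervalIntegral.integral_of_le (hlt i),
        integral_Icc_eq_integral_Ioc]
      exact setIntegral_congr_fun measurableSet_Ioc fun s hs => hg_eq i (Ioc_subset_Icc_self hs)
  have hG_mem : ∀ i, ∀ t ∈ Icc (τ i.castSucc) (τ i.succ), G i t = ∫ s in τ i.castSucc..t, g i s :=
    fun i t ht => by simp only [G, projIcc_of_mem _ ht]
  have hG_const : ∀ i j, j ≠ i → ∀ t ∈ Icc (τ i.castSucc) (τ i.succ),
      G j t = G j (τ i.castSucc) := by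
    intro i j hji t ht
    rcases hji.lt_or_gt with hji | hij
    · have hj : τ j.succ ≤ τ i.castSucc := hτ.monotone (Fin.succ_le_castSucc_iff.2 hji)
      rw [hG_right j t (hj.trans ht.1), hG_right j _ hj]
    · have hj : τ i.succ ≤ τ j.castSucc := hτ.monotone (Fin.succ_le_castSucc_iff.2 hij)
      rw [hG_left j t (ht.2.trans hj), hG_left j _ ((hlt i).trans hj)]
  refine ⟨fun t => ∑ i, G i t, ?_, ?_, fun i => ?_⟩
  · exact Finset.sum_eq_zero fun i _ => hG_left i _ (hτ.monotone (Fin.zero_le _))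
  · exact Finset.sum_congr rfl fun i _ => hG_right i _ (hτ.monotone (Fin.le_last _))
  set v : ℝ → ℝ := fun t => (∑ j, G j (τ i.castSucc)) + ∫ s in τ i.castSucc..t, g i s
  have hv_deriv : ∀ t, HasDerivAt v (g i t) t := fun t =>
    ((hg_cont i).integral_hasStrictDerivAt _ t).hasDerivAt.const_add _
  have hv : ContDiff ℝ 1 v := contDiff_one_iff_deriv.2
    ⟨fun t => (hv_deriv t).differentiableAt, funext (fun t => (hv_deriv t).deriv) ▸ hg_cont i⟩
  have hWv : EqOn (fun t => ∑ j, G j t) v (Icc (τ i.castSucc) (τ i.succ)) := by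
    intro t ht
    simp only [v]
    rw [← Finset.add_sum_erase _ _ (Finset.mem_univ i),
      ← Finset.add_sum_erase _ _ (Finset.mem_univ i), Finset.sum_congr rfl fun j hj => hG_const i j (Finset.ne_of_mem_erase hj) t ht,
      hG_mem i t ht, hG_left i _ le_rfl]
    ring
  refine ⟨hv.contDiffOn.congr hWv, fun t ht => ?_⟩
  rw [← hg_eq i ht]
  exact (hv_deriv t).hasDerivWithinAt.congr_of_mem hWv ht

end PiecewisePrimitive

theorem IsPiecewiseTimelike.exists_isProductTimelike {E : Type*} [NormedAddCommGroup E]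
    [NormedSpace ℝ E] {C : E → Set E} {F : E → E → ℝ}
    (hF_cont : ContinuousOn (fun p => F p.1 p.2) {p : E × E | p.2 ∈ C p.1})
    (hF_pos : ∀ x, ∀ v ∈ interior (C x), 0 < F x v)
    {x : ℝ → E} {m : ℕ} {τ : Fin (m + 2) → ℝ} (hx : IsPiecewiseTimelike C x m τ) {z₀ z₁ : ℝ}
    (hz : |z₁ - z₀| < piecewiseLength F x m τ) :
    ∃ w : ℝ → ℝ, IsProductTimelike C F x w ∧ w 0 = z₀ ∧ w 1 = z₁ := by
  obtain ⟨hτ, hτ0, hτ1, hx⟩ := hx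
  have hlen_pos : 0 < piecewiseLength F x m τ := (abs_nonneg _).trans_lt hz
  set c := (z₁ - z₀) / piecewiseLength F x m τ
  have hc : |c| < 1 := by rwa [abs_div, abs_of_pos hlen_pos, div_lt_one hlen_pos]
  obtain ⟨W, hW0, hW1, hW⟩ := exists_piecewise_primitive hτ
    (f := fun i t => F (x t) (derivWithin x (Icc (τ i.castSucc) (τ i.succ)) t)) fun i =>
      hF_cont.comp ((hx i).1.continuousOn.prodMk
        ((hx i).1.continuousOn_derivWithin (uniqueDiffOn_Icc (hτ i.castSucc_lt_succ)) le_rfl))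
        fun t ht => show _ ∈ C (x t) from interior_subset ((hx i).2 t ht)
  rw [hτ0] at hW0
  replace hW1 : W 1 = piecewiseLength F x m τ := hτ1 ▸ hW1
  refine ⟨fun t => z₀ + c * W t, ⟨m, τ, hτ, hτ0, hτ1, fun i => ⟨(hx i).1,
    contDiffOn_const.add (contDiffOn_const.mul (hW i).1), fun t ht => ⟨(hx i).2 t ht, ?_⟩⟩⟩,
    by simp [hW0], ?_⟩
  · rw [(((hW i).2 t ht).const_mul c).const_add z₀ |>.derivWithin
      (uniqueDiffOn_Icc (hτ i.castSucc_lt_succ) t ht), abs_mul,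
      abs_of_pos (hF_pos _ _ ((hx i).2 t ht))]
    exact mul_lt_of_lt_one_left (hF_pos _ _ ((hx i).2 t ht)) hc
  · simp only [hW1, c]
    field_simp [hlen_pos.ne']
    ring

theorem projection_of_achronal_is_maximizing_general
    {n : ℕ}
    (C : EuclideanSpace ℝ (Fin (n + 1)) → Set (EuclideanSpace ℝ (Fin (n + 1))))
    -- `C` is a continuous proper cone distribution:
    (hC_zero : ∀ x, (0 : EuclideanSpace ℝ (Fin (n + 1))) ∉ C x)
    (hC_smul : ∀ x, ∀ c : ℝ, 0 < c → ∀ v ∈ C x, c • v ∈ C x)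
    (hC_bundle_closed : ∀ p : EuclideanSpace ℝ (Fin (n + 1)) × EuclideanSpace ℝ (Fin (n + 1)),
      p.2 ≠ 0 → p ∈ closure {q : EuclideanSpace ℝ (Fin (n + 1)) ×
        EuclideanSpace ℝ (Fin (n + 1)) | q.2 ∈ C q.1} → p.2 ∈ C p.1)
    -- `F` is a fundamental function for `C`, positive on timelike vectors:
    (F : EuclideanSpace ℝ (Fin (n + 1)) → EuclideanSpace ℝ (Fin (n + 1)) → ℝ)
    (hF_cont : ContinuousOn (fun p => F p.1 p.2)
      {p : EuclideanSpace ℝ (Fin (n + 1)) × EuclideanSpace ℝ (Fin (n + 1)) | p.2 ∈ C p.1})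
    (hF_hom : ∀ x, ∀ c : ℝ, 0 < c → ∀ v ∈ C x, F x (c • v) = c * F x v)
    (hF_pos : ∀ x, ∀ v ∈ interior (C x), 0 < F x v)
    -- `p`, `q` and their (finite) Lorentz–Finsler distance `d`:
    (p q : EuclideanSpace ℝ (Fin (n + 1))) (d : ℝ)
    (hd_ub : ∀ (σ : ℝ → EuclideanSpace ℝ (Fin (n + 1))) (a b : ℝ), a ≤ b →
      IsCausalCurve C σ a b → σ a = p → σ b = q → curveLength F σ a b ≤ d)
    (hd_approx : ∀ R < d, ∃ (x : ℝ → EuclideanSpace ℝ (Fin (n + 1)))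
      (m : ℕ) (τ : Fin (m + 2) → ℝ), IsPiecewiseTimelike C x m τ ∧
        x 0 = p ∧ x 1 = q ∧ R < piecewiseLength F x m τ)
    -- `Γ = (γ, z)` is a continuous causal curve for the product cone structure `C^×`:
    (γ : ℝ → EuclideanSpace ℝ (Fin (n + 1))) (z : ℝ → ℝ)
    (hΓ_lip : ∃ K : NNReal, LipschitzOnWith K (fun t => (γ t, z t)) (Set.Icc 0 1))
    (hγ0 : γ 0 = p) (hγ1 : γ 1 = q)
    (hΓ_causal : ∀ᵐ t ∂(volume.restrict (Set.Icc (0 : ℝ) 1)),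
      HasDerivWithinAt γ (derivWithin γ (Set.Icc 0 1) t) (Set.Icc 0 1) t ∧
      HasDerivWithinAt z (derivWithin z (Set.Icc 0 1) t) (Set.Icc 0 1) t ∧
      derivWithin γ (Set.Icc 0 1) t ∈ C (γ t) ∧
      |derivWithin z (Set.Icc 0 1) t| ≤ F (γ t) (derivWithin γ (Set.Icc 0 1) t))
    -- `Γ` is achronal: no product timelike curve has both endpoints on the image of `Γ`:
    (hΓ_achronal : ¬ ∃ (lam : ℝ → EuclideanSpace ℝ (Fin (n + 1))) (w : ℝ → ℝ),
      IsProductTimelike C F lam w ∧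
      (∃ s₁ ∈ Set.Icc (0 : ℝ) 1, lam 0 = γ s₁ ∧ w 0 = z s₁) ∧
      (∃ s₂ ∈ Set.Icc (0 : ℝ) 1, lam 1 = γ s₂ ∧ w 1 = z s₂)) :
    curveLength F γ 0 1 = d := by
  obtain ⟨K, hΓ_lip⟩ := hΓ_lip
  have hγ : IsCausalCurve C γ 0 1 :=
    ⟨⟨_, LipschitzWith.prod_fst.comp_lipschitzOnWith hΓ_lip⟩,
      hΓ_causal.mono fun t ht => ⟨ht.1, ht.2.2.1⟩⟩
  have hlen_le : curveLength F γ 0 1 ≤ d := hd_ub γ 0 1 zero_le_one hγ hγ0 hγ1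
  have hz_le : |z 1 - z 0| ≤ curveLength F γ 0 1 :=
    abs_sub_le_curveLength zero_le_one (LipschitzWith.prod_snd.comp_lipschitzOnWith hΓ_lip)
      (hγ.integrableOn_length hC_zero hC_smul hC_bundle_closed hF_cont hF_hom)
      (hΓ_causal.mono fun t ht => ht.2.2.2)
  have hd_le : d ≤ |z 1 - z 0| := by
    by_contra! hlt
    obtain ⟨x, m, τ, hx, hx0, hx1, hlong⟩ := hd_approx _ hlt
    obtain ⟨w, hw, hw0, hw1⟩ := hx.exists_isProductTimelike hF_cont hF_pos hlong
    exact hΓ_achronal ⟨x, w, hw, ⟨0, left_mem_Icc.2 zero_le_one, hx0.trans hγ0.symm, hw0⟩,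
      ⟨1, right_mem_Icc.2 zero_le_one, hx1.trans hγ1.symm, hw1⟩⟩
  exact le_antisymm hlen_le (hd_le.trans hz_le)

/-- **Projections of achronal causal curves of the product cone structure are
maximizers (Theorem 4.1, substantive direction, in the chart `M = ℝ^{n+1}`).**
Let `C` be a continuous proper cone distribution on `ℝ^{n+1}` and `F` a fundamental
function with `F > 0` on `Int C`. Let `p, q` have finite Lorentz–Finsler distance `d`
(i.e. `d` is an upper bound for the lengths of causal curves from `p` to `q`, and for
every `R < d` there is a piecewise `C¹` timelike curve from `p` to `q` of length `> R`).
If `Γ = (γ, z)` is a continuous causal curve for `C^×` from `(p, z 0)` to `(q, z 1)`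
which is achronal, then its projection `γ` is maximizing: `ℓ(γ) = d`. -/
theorem projection_of_achronal_is_maximizing
    {n : ℕ}
    (C : EuclideanSpace ℝ (Fin (n + 1)) → Set (EuclideanSpace ℝ (Fin (n + 1))))
    -- `C` is a continuous proper cone distribution:
    (hC_zero : ∀ x, (0 : EuclideanSpace ℝ (Fin (n + 1))) ∉ C x)
    (hC_conv : ∀ x, Convex ℝ (insert (0 : EuclideanSpace ℝ (Fin (n + 1))) (C x)))
    (hC_smul : ∀ x, ∀ c : ℝ, 0 < c → ∀ v ∈ C x, c • v ∈ C x)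
    (hC_closed : ∀ x, IsClosed (insert (0 : EuclideanSpace ℝ (Fin (n + 1))) (C x)))
    (hC_sharp : ∀ x, ∀ v ∈ C x, -v ∉ C x)
    (hC_int : ∀ x, (interior (C x)).Nonempty)
    (hC_bundle_closed : ∀ p : EuclideanSpace ℝ (Fin (n + 1)) × EuclideanSpace ℝ (Fin (n + 1)),
      p.2 ≠ 0 → p ∈ closure {q : EuclideanSpace ℝ (Fin (n + 1)) ×
        EuclideanSpace ℝ (Fin (n + 1)) | q.2 ∈ C q.1} → p.2 ∈ C p.1)
    (hC_bundle_open : IsOpen {p : EuclideanSpace ℝ (Fin (n + 1)) ×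
      EuclideanSpace ℝ (Fin (n + 1)) | p.2 ∈ interior (C p.1)})
    -- `F` is a fundamental function for `C`, positive on timelike vectors:
    (F : EuclideanSpace ℝ (Fin (n + 1)) → EuclideanSpace ℝ (Fin (n + 1)) → ℝ)
    (hF_cont : ContinuousOn (fun p => F p.1 p.2)
      {p : EuclideanSpace ℝ (Fin (n + 1)) × EuclideanSpace ℝ (Fin (n + 1)) | p.2 ∈ C p.1})
    (hF_nonneg : ∀ x, ∀ v ∈ C x, 0 ≤ F x v)
    (hF_hom : ∀ x, ∀ c : ℝ, 0 < c → ∀ v ∈ C x, F x (c • v) = c * F x v)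
    (hF_conc : ∀ x, ∀ v ∈ C x, ∀ w ∈ C x, ∀ s : ℝ, 0 ≤ s → s ≤ 1 →
      s * F x v + (1 - s) * F x w ≤ F x (s • v + (1 - s) • w))
    (hF_ne : ∀ x, ∃ v ∈ C x, F x v ≠ 0)
    (hF_pos : ∀ x, ∀ v ∈ interior (C x), 0 < F x v)
    -- `p`, `q` and their (finite) Lorentz–Finsler distance `d`:
    (p q : EuclideanSpace ℝ (Fin (n + 1))) (d : ℝ)
    (hd_ub : ∀ (σ : ℝ → EuclideanSpace ℝ (Fin (n + 1))) (a b : ℝ), a ≤ b →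
      IsCausalCurve C σ a b → σ a = p → σ b = q → curveLength F σ a b ≤ d)
    (hd_approx : ∀ R < d, ∃ (x : ℝ → EuclideanSpace ℝ (Fin (n + 1)))
      (m : ℕ) (τ : Fin (m + 2) → ℝ), IsPiecewiseTimelike C x m τ ∧
        x 0 = p ∧ x 1 = q ∧ R < piecewiseLength F x m τ)
    -- `Γ = (γ, z)` is a continuous causal curve for the product cone structure `C^×`:
    (γ : ℝ → EuclideanSpace ℝ (Fin (n + 1))) (z : ℝ → ℝ)
    (hΓ_lip : ∃ K : NNReal, LipschitzOnWith K (fun t => (γ t, z t)) (Set.Icc 0 1))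
    (hγ0 : γ 0 = p) (hγ1 : γ 1 = q)
    (hΓ_causal : ∀ᵐ t ∂(volume.restrict (Set.Icc (0 : ℝ) 1)),
      HasDerivWithinAt γ (derivWithin γ (Set.Icc 0 1) t) (Set.Icc 0 1) t ∧
      HasDerivWithinAt z (derivWithin z (Set.Icc 0 1) t) (Set.Icc 0 1) t ∧
      derivWithin γ (Set.Icc 0 1) t ∈ C (γ t) ∧
      |derivWithin z (Set.Icc 0 1) t| ≤ F (γ t) (derivWithin γ (Set.Icc 0 1) t))
    -- `Γ` is achronal: no product timelike curve has both endpoints on the image of `Γ`: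
    (hΓ_achronal : ¬ ∃ (lam : ℝ → EuclideanSpace ℝ (Fin (n + 1))) (w : ℝ → ℝ),
      IsProductTimelike C F lam w ∧
      (∃ s₁ ∈ Set.Icc (0 : ℝ) 1, lam 0 = γ s₁ ∧ w 0 = z s₁) ∧
      (∃ s₂ ∈ Set.Icc (0 : ℝ) 1, lam 1 = γ s₂ ∧ w 1 = z s₂)) :
    curveLength F γ 0 1 = d :=
  projection_of_achronal_is_maximizing_general C hC_zero hC_smul hC_bundle_closed F hF_cont hF_hom
    hF_pos p q d hd_ub hd_approx γ z hΓ_lip hγ0 hγ1 hΓ_causal hΓ_achronal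
end
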